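/- arXiv:1206.1300 — 10 statements merged into one kernel-verified Lean document; each statement's English description precedes it below -/
import Mathlib

section
/- Let n ≥ 2 and 1 ≤ k ≤ n−1 be integers. Then the covering number of the circulant matrix C_n^k equals ⌈n/k⌉; moreover, for every i ∈ Z_n the set x^i = {i + hk : 0 ≤ h ≤ ⌈n/k⌉ − 1} ⊆ Z_n is a cover of C_n^k of cardinality exactly ⌈n/k⌉. -/
/-- `Cseg n k i` is the set `C^i = {i, i+1, …, i+k−1} ⊆ ℤ_n`. -/
def Cseg (n k : ℕ) (i : ZMod n) : Finset (ZMod n) :=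
  (Finset.range k).image fun h : ℕ => i + (h : ZMod n)

/-- A cover of the circulant matrix `C_n^k`. -/
def IsCover (n k : ℕ) (x : Finset (ZMod n)) : Prop :=
  ∀ i : ZMod n, (x ∩ Cseg n k i).Nonempty

/-- A minimal cover of `C_n^k`. -/
def IsMinimalCover (n k : ℕ) (x : Finset (ZMod n)) : Prop :=
  IsCover n k x ∧ ∀ y : Finset (ZMod n), y ⊂ x → ¬ IsCover n k y

/-- The covering number `τ(C_n^k)`. -/
noncomputable def coveringNumber (n k : ℕ) : ℕ :=
  sInf {m : ℕ | ∃ x : Finset (ZMod n), IsCover n k x ∧ x.card = m}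

/-- A minimum cover of `C_n^k`. -/
noncomputable def IsMinimumCover (n k : ℕ) (x : Finset (ZMod n)) : Prop :=
  IsCover n k x ∧ x.card = coveringNumber n k

/-- `xcov n k i` is the cover `x^i = {i + h·k : 0 ≤ h ≤ ⌈n/k⌉ − 1}`. -/
def xcov (n k : ℕ) (i : ZMod n) : Finset (ZMod n) :=
  (Finset.range ((n + k - 1) / k)).image fun h : ℕ => i + ((h * k : ℕ) : ZMod n)

/-- The cyclic closed interval `[a,b]_n` of `ℤ_n`. -/
def cycInterval (n : ℕ) (a b : ZMod n) : Finset (ZMod n) :=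
  (Finset.range ((b - a).val + 1)).image fun h : ℕ => a + (h : ZMod n)

/-- The inequality `a·x ≥ α` is valid for `Q(C_n^k)`. -/
def IsValid (n k : ℕ) (a : ZMod n → ℤ) (α : ℤ) : Prop :=
  ∀ x : Finset (ZMod n), IsCover n k x → α ≤ ∑ i ∈ x, a i

/-- A root of a valid inequality: a cover satisfying it with equality. -/
def IsRoot (n k : ℕ) (a : ZMod n → ℤ) (α : ℤ) (x : Finset (ZMod n)) : Prop :=
  IsCover n k x ∧ ∑ i ∈ x, a i = α

/-- Characteristic vector of a subset of `ℤ_n`. -/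
noncomputable def charVec (n : ℕ) (x : Finset (ZMod n)) : ZMod n → ℝ :=
  fun i => if i ∈ x then 1 else 0

/-- `a·x ≥ α` is facet defining for `Q(C_n^k)`: it is valid, and the characteristic
vectors of its roots affinely span an `(n−1)`-dimensional affine subspace of `ℝ^n`. -/
def IsFacet (n k : ℕ) (a : ZMod n → ℤ) (α : ℤ) : Prop :=
  IsValid n k a α ∧
    Module.finrank ℝ
      (affineSpan ℝ
        {v : ZMod n → ℝ | ∃ x : Finset (ZMod n), IsRoot n k a α x ∧ v = charVec n x}).direction
      = n - 1

/-- `a·x ≥ α` is a positive multiple of one of the boolean inequalities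
`x_i ≥ 0`, `−x_i ≥ −1`, `∑_{j ∈ C^i} x_j ≥ 1`. -/
def IsBooleanMultiple (n k : ℕ) (a : ZMod n → ℤ) (α : ℤ) : Prop :=
  ∃ c : ℤ, 0 < c ∧
    ( (∃ i : ZMod n, (∀ j, a j = if j = i then c else 0) ∧ α = 0)
    ∨ (∃ i : ZMod n, (∀ j, a j = if j = i then -c else 0) ∧ α = -c)
    ∨ (∃ i : ZMod n, (∀ j, a j = if j ∈ Cseg n k i then c else 0) ∧ α = c) )

/-- `a·x ≥ α` is a positive multiple of the rank constraint `∑ x_i ≥ ⌈n/k⌉`. -/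
def IsRankMultiple (n k : ℕ) (a : ZMod n → ℤ) (α : ℤ) : Prop :=
  ∃ c : ℤ, 0 < c ∧ (∀ j, a j = c) ∧ α = c * (((n + k - 1) / k : ℕ) : ℤ)

lemma xcov_card_aux (n k : ℕ) (hn : 2 ≤ n) (hk1 : 1 ≤ k) (hk2 : k ≤ n - 1) (i : ZMod n) :
    (xcov n k i).card = (n + k - 1) / k := by
  haveI : NeZero n := ⟨by omega⟩
  set m := (n + k - 1) / k with hm
  have hm1 : m = (n - 1) / k + 1 := by
    rw [hm, show n + k - 1 = (n - 1) + k by omega, Nat.add_div_right _ (by omega)]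
  have hsmall : ∀ h < m, h * k < n := by
    intro h hh
    have h1 : h ≤ (n - 1) / k := by omega
    have h2 : h * k ≤ ((n - 1) / k) * k := Nat.mul_le_mul_right _ h1
    have h3 : ((n - 1) / k) * k ≤ n - 1 := Nat.div_mul_le_self _ _
    omega
  rw [xcov, Finset.card_image_of_injOn, Finset.card_range]
  intro a ha b hb hab
  simp only [Finset.mem_coe, Finset.mem_range] at ha hb
  have hab' : ((a * k : ℕ) : ZMod n) = ((b * k : ℕ) : ZMod n) := by
    have := add_left_cancel hab
    exact this
  have := congrArg ZMod.val hab'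
  rw [ZMod.val_cast_of_lt (hsmall a ha), ZMod.val_cast_of_lt (hsmall b hb)] at this
  exact Nat.eq_of_mul_eq_mul_right (by omega) this

lemma ceil_bounds (n k : ℕ) (hk1 : 1 ≤ k) (hn : 1 ≤ n) :
    n ≤ ((n + k - 1) / k) * k ∧ ((n + k - 1) / k - 1) * k ≤ n - 1 := by
  obtain ⟨Q, hQ⟩ : ∃ q, (n - 1) / k = q := ⟨_, rfl⟩
  obtain ⟨R, hR⟩ : ∃ r, (n - 1) % k = r := ⟨_, rfl⟩
  have hRk : R < k := by rw [← hR]; exact Nat.mod_lt _ (by omega)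
  have hQR : k * Q + R = n - 1 := by rw [← hQ, ← hR]; exact Nat.div_add_mod _ _
  have hm1 : (n + k - 1) / k = Q + 1 := by
    rw [show n + k - 1 = (n - 1) + k by omega, Nat.add_div_right _ (by omega), hQ]
  rw [hm1]
  clear hQ hR hm1
  have e1 : (Q + 1) * k = k * Q + k := by ring
  have e2 : (Q + 1 - 1) * k = k * Q := by simp [Nat.mul_comm]
  omega

lemma find_ht (n k m v : ℕ) (hk1 : 1 ≤ k) (hn : 2 ≤ n) (hvn : v < n)
    (hnk : n ≤ m * k) (hbk : (m - 1) * k ≤ n - 1) :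
    ∃ h t : ℕ, h < m ∧ t < k ∧ (h * k = v + t ∨ (h = 0 ∧ v + t = n)) := by
  have hm1 : 1 ≤ m := by
    rcases Nat.eq_zero_or_pos m with h | h
    · subst h; rw [Nat.zero_mul] at hnk; omega
    · exact h
  have hmm : (m - 1) * k + k = m * k := by
    calc (m - 1) * k + k = ((m - 1) + 1) * k := by ring
      _ = m * k := by rw [Nat.sub_add_cancel hm1]
  by_cases hcase : v ≤ (m - 1) * k
  · obtain ⟨q, r, hrk, hvqr⟩ : ∃ q r, r < k ∧ v = q * k + r :=
      ⟨v / k, v % k, Nat.mod_lt _ (by omega), by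
        rw [Nat.mul_comm]; exact (Nat.div_add_mod v k).symm⟩
    by_cases hr0 : r = 0
    · refine ⟨q, 0, ?_, by omega, Or.inl (by omega)⟩
      have h1 : q * k ≤ (m - 1) * k := by omega
      have h2 : q ≤ m - 1 := Nat.le_of_mul_le_mul_right h1 (by omega)
      omega
    · have hq1k : (q + 1) * k = q * k + k := by ring
      refine ⟨q + 1, k - r, ?_, by omega, Or.inl (by omega)⟩
      have h1 : q * k < (m - 1) * k := by omega
      have h2 : q < m - 1 := Nat.lt_of_mul_lt_mul_right h1
      omega
  · exact ⟨0, n - v, by omega, by omega, Or.inr ⟨rfl, by omega⟩⟩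

lemma xcov_cover_aux (n k : ℕ) (hn : 2 ≤ n) (hk1 : 1 ≤ k) (hk2 : k ≤ n - 1) (i : ZMod n) :
    IsCover n k (xcov n k i) := by
  haveI : NeZero n := ⟨by omega⟩
  obtain ⟨hnk, hbk⟩ := ceil_bounds n k hk1 (by omega)
  intro i'
  set d : ZMod n := i' - i with hd
  have hvn : d.val < n := ZMod.val_lt d
  have hdcast : ((d.val : ℕ) : ZMod n) = d := by rw [ZMod.natCast_val, ZMod.cast_id]
  obtain ⟨h, t, hhm, htk, heq⟩ := find_ht n k ((n + k - 1) / k) d.val hk1 hn hvn hnk hbk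
  have hmain : i + ((h * k : ℕ) : ZMod n) = i' + (t : ℕ) := by
    rcases heq with heq | ⟨h0, heq⟩
    · rw [heq]
      push_cast
      rw [hdcast, hd]
      ring
    · subst h0
      have hz : ((d.val : ℕ) : ZMod n) + ((t : ℕ) : ZMod n) = 0 := by
        rw [← Nat.cast_add, heq, ZMod.natCast_self]
      rw [hd] at hdcast
      push_cast
      linear_combination -hz + hdcast
  refine ⟨i + ((h * k : ℕ) : ZMod n), Finset.mem_inter.2 ⟨?_, ?_⟩⟩
  · exact Finset.mem_image.2 ⟨h, Finset.mem_range.2 hhm, rfl⟩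
  · exact Finset.mem_image.2 ⟨t, Finset.mem_range.2 htk, hmain.symm⟩

lemma cover_lb_aux (n k : ℕ) (hn : 2 ≤ n) (hk1 : 1 ≤ k) (x : Finset (ZMod n))
    (hx : IsCover n k x) : (n + k - 1) / k ≤ x.card := by
  haveI : NeZero n := ⟨by omega⟩
  have key : ∀ i : ZMod n, ∃ p : ZMod n × ℕ, p.1 ∈ x ∧ p.2 < k ∧ p.1 = i + (p.2 : ZMod n) := by
    intro i
    obtain ⟨j, hj⟩ := hx i
    rw [Finset.mem_inter] at hj
    obtain ⟨hj1, hj2⟩ := hj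
    obtain ⟨t, ht, hjt⟩ := Finset.mem_image.1 hj2
    exact ⟨(j, t), hj1, Finset.mem_range.1 ht, hjt.symm⟩
  choose g hg1 hg2 hg3 using key
  have hle : (Finset.univ : Finset (ZMod n)).card ≤ (x ×ˢ Finset.range k).card := by
    apply Finset.card_le_card_of_injOn g
    · intro i _
      exact Finset.mem_product.2 ⟨hg1 i, Finset.mem_range.2 (hg2 i)⟩
    · intro a _ b _ hab
      have h1 := hg3 a
      have h2 := hg3 b
      rw [hab] at h1
      rw [h1] at h2
      exact add_right_cancel h2
  rw [Finset.card_univ, ZMod.card, Finset.card_product, Finset.card_range] at hle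
  have h2 : (n + k - 1) / k ≤ (x.card * k + (k - 1)) / k := Nat.div_le_div_right (by omega)
  have h3 : (x.card * k + (k - 1)) / k = x.card := by
    rw [show x.card * k + (k - 1) = (k - 1) + x.card * k by ring,
      Nat.add_mul_div_right _ _ (show 0 < k by omega), Nat.div_eq_of_lt (by omega)]
    omega
  omega

theorem stmt0 (n k : ℕ) (hn : 2 ≤ n) (hk1 : 1 ≤ k) (hk2 : k ≤ n - 1) :
    coveringNumber n k = (n + k - 1) / k ∧
    ∀ i : ZMod n, IsCover n k (xcov n k i) ∧ (xcov n k i).card = (n + k - 1) / k := by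
  have hcov := fun i => xcov_cover_aux n k hn hk1 hk2 i
  have hcard := fun i => xcov_card_aux n k hn hk1 hk2 i
  have hmem : (n + k - 1) / k ∈ {m : ℕ | ∃ x : Finset (ZMod n), IsCover n k x ∧ x.card = m} :=
    ⟨xcov n k 0, hcov 0, hcard 0⟩
  refine ⟨?_, fun i => ⟨hcov i, hcard i⟩⟩
  refine le_antisymm (Nat.sInf_le hmem) (le_csInf ⟨_, hmem⟩ ?_)
  rintro b ⟨x, hx, rfl⟩
  exact cover_lb_aux n k hn hk1 x hx
end

section
/- Let n ≥ 2 and 1 ≤ k ≤ n−1 be integers. If x ⊆ Z_n is a minimal cover of the circulant matrix C_n^k, then |x ∩ C^i| ≤ 2 for every i ∈ Z_n. -/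
theorem stmt1 (n k : ℕ) (hn : 2 ≤ n) (hk1 : 1 ≤ k) (hk2 : k ≤ n - 1)
    (x : Finset (ZMod n)) (hx : IsMinimalCover n k x) :
    ∀ i : ZMod n, (x ∩ Cseg n k i).card ≤ 2 := by
  intro i
  by_contra hcard
  push_neg at hcard
  have hkn : k < n := by omega
  set f : ℕ → ZMod n := fun h => i + (h : ZMod n) with hf
  have hcast : ∀ a b : ℕ, a < k → b < k → f a = f b → a = b := by
    intro a b ha hb hab
    have h1 : (a : ZMod n) = b := by
      have := hab
      simpa [f, add_right_inj] using this
    have h2 := congrArg ZMod.val h1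
    rwa [ZMod.val_cast_of_lt (by omega), ZMod.val_cast_of_lt (by omega)] at h2
  set S : Finset ℕ := (Finset.range k).filter (fun h => f h ∈ x) with hS
  have hSx : x ∩ Cseg n k i = S.image f := by
    ext j
    simp only [Finset.mem_inter, Finset.mem_image, Finset.mem_filter,
      Finset.mem_range, Cseg, S]
    constructor
    · rintro ⟨hj, h, hh, rfl⟩; exact ⟨h, ⟨hh, hj⟩, rfl⟩
    · rintro ⟨h, ⟨hh, hj⟩, rfl⟩; exact ⟨hj, h, hh, rfl⟩
  have hScard : 2 < S.card := by
    have : (S.image f).card = S.card := by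
      apply Finset.card_image_of_injOn
      intro a ha b hb hab
      simp only [S, Finset.coe_filter, Set.mem_setOf_eq, Finset.mem_range] at ha hb
      exact hcast a b ha.1 hb.1 hab
    rw [hSx, this] at hcard; exact hcard
  have hne : S.Nonempty := Finset.card_pos.mp (by omega)
  set a := S.min' hne with ha
  set c := S.max' hne with hc
  have haS : a ∈ S := S.min'_mem hne
  have hcS : c ∈ S := S.max'_mem hne
  have hT : ((S.erase c).erase a).Nonempty := by
    apply Finset.card_pos.mp
    have h1 := Finset.card_erase_le (s := S.erase c) (a := a)
    have h2 : (S.erase c).card = S.card - 1 := Finset.card_erase_of_mem hcS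
    have h3 : ((S.erase c).erase a).card = (S.erase c).card - 1 ∨
        ((S.erase c).erase a).card = (S.erase c).card := by
      by_cases h : a ∈ S.erase c
      · exact Or.inl (Finset.card_erase_of_mem h)
      · exact Or.inr (by rw [Finset.erase_eq_of_notMem h])
    omega
  obtain ⟨b, hb⟩ := hT
  have hbS : b ∈ S := Finset.mem_of_mem_erase (Finset.mem_of_mem_erase hb)
  have hba : b ≠ a := Finset.ne_of_mem_erase hb
  have hbc : b ≠ c := Finset.ne_of_mem_erase (Finset.mem_of_mem_erase hb)
  have hab : a < b := lt_of_le_of_ne (S.min'_le b hbS) (Ne.symm hba)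
  have hbc' : b < c := lt_of_le_of_ne (S.le_max' b hbS) hbc
  have hak : a < k := by
    have := haS; simp only [S, Finset.mem_filter, Finset.mem_range] at this; exact this.1
  have hck : c < k := by
    have := hcS; simp only [S, Finset.mem_filter, Finset.mem_range] at this; exact this.1
  have hax : f a ∈ x := by
    have := haS; simp only [S, Finset.mem_filter] at this; exact this.2
  have hbx : f b ∈ x := by
    have := hbS; simp only [S, Finset.mem_filter] at this; exact this.2
  have hcx : f c ∈ x := by
    have := hcS; simp only [S, Finset.mem_filter] at this; exact this.2
  have hcover : IsCover n k (x.erase (f b)) := by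
    intro m
    obtain ⟨j, hj⟩ := hx.1 m
    rw [Finset.mem_inter] at hj
    by_cases hjb : j = f b
    · subst hjb
      obtain ⟨t, ht, hteq⟩ : ∃ t, t < k ∧ m + (t : ZMod n) = f b := by
        have := hj.2
        simp only [Cseg, Finset.mem_image, Finset.mem_range] at this
        obtain ⟨t, ht, heq⟩ := this
        exact ⟨t, ht, heq⟩
      by_cases hcase : b - a ≤ t
      · refine ⟨f a, Finset.mem_inter.mpr ⟨Finset.mem_erase.mpr ⟨?_, hax⟩, ?_⟩⟩
        · intro h; exact absurd (hcast a b hak (by omega) h) hba.symm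
        · simp only [Cseg, Finset.mem_image, Finset.mem_range]
          refine ⟨t - (b - a), by omega, ?_⟩
          have e1 : ((t - (b - a) : ℕ) : ZMod n) = (t : ZMod n) - ((b : ZMod n) - a) := by
            rw [Nat.cast_sub hcase, Nat.cast_sub (by omega : a ≤ b)]
          rw [e1]
          have : m + (t : ZMod n) = i + (b : ZMod n) := hteq
          simp only [f]
          linear_combination this
      · refine ⟨f c, Finset.mem_inter.mpr ⟨Finset.mem_erase.mpr ⟨?_, hcx⟩, ?_⟩⟩
        · intro h; exact absurd (hcast c b hck (by omega) h) hbc.symm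
        · simp only [Cseg, Finset.mem_image, Finset.mem_range]
          refine ⟨t + (c - b), by omega, ?_⟩
          have e1 : ((t + (c - b) : ℕ) : ZMod n) = (t : ZMod n) + ((c : ZMod n) - b) := by
            rw [Nat.cast_add, Nat.cast_sub (by omega : b ≤ c)]
          rw [e1]
          have : m + (t : ZMod n) = i + (b : ZMod n) := hteq
          simp only [f]
          linear_combination this
    · exact ⟨j, Finset.mem_inter.mpr ⟨Finset.mem_erase.mpr ⟨hjb, hj.1⟩, hj.2⟩⟩
  exact hx.2 _ (Finset.erase_ssubset hbx) hcover
end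

section
/- Let n ≥ 2, 1 ≤ k ≤ n−1, and let a·x ≥ α be a non boolean non rank facet defining inequality of Q(C_n^k) with positive integer coefficients, and set a^0 = min{a_i : i ∈ Z_n} and W = {i ∈ Z_n : a_i > a^0}. Then ∅ ⊊ W ⊊ Z_n, α ≥ a^0·(⌈n/k⌉ + 1), and every minimum cover x of C_n^k satisfies x ∩ W ≠ ∅. -/
section Cover

variable {n k : ℕ}

lemma IsCover.le_card_mul [NeZero n] {x : Finset (ZMod n)} (hx : IsCover n k x) :
    n ≤ x.card * k := by
  have hsub : (Finset.univ : Finset (ZMod n)) ⊆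
      x.biUnion fun j => (Finset.range k).image fun h : ℕ => j - h := by
    intro i _
    obtain ⟨j, hj⟩ := hx i
    obtain ⟨hjx, hjC⟩ := Finset.mem_inter.1 hj
    obtain ⟨h, hh, rfl⟩ := Finset.mem_image.1 hjC
    exact Finset.mem_biUnion.2 ⟨_, hjx, Finset.mem_image.2 ⟨h, hh, add_sub_cancel_right _ _⟩⟩
  calc n = (Finset.univ : Finset (ZMod n)).card := (ZMod.card n).symm
    _ ≤ _ := Finset.card_le_card hsub
    _ ≤ x.card * k := Finset.card_biUnion_le_card_mul _ _ _ fun j _ =>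
        Finset.card_image_le.trans (Finset.card_range k).le

lemma IsCover.ceilDiv_le_card [NeZero n] (hk : 0 < k) {x : Finset (ZMod n)}
    (hx : IsCover n k x) : (n + k - 1) / k ≤ x.card :=
  (ceilDiv_le_iff_le_mul hk).2 (mul_comm k _ ▸ hx.le_card_mul)

lemma card_xcov_le (i : ZMod n) : (xcov n k i).card ≤ (n + k - 1) / k :=
  Finset.card_image_le.trans (Finset.card_range _).le

lemma isCover_xcov [NeZero n] (hk : 0 < k) (i : ZMod n) : IsCover n k (xcov n k i) := by
  intro j
  set t := (n + k - 1) / k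
  have hnt : n ≤ k * t := (ceilDiv_le_iff_le_mul hk).1 le_rfl
  set v := (j - i).val
  have hv : v < n := ZMod.val_lt _
  have hj : j = i + v := by simp [v]
  suffices ∃ h < t, ∃ d < k, ((h * k : ℕ) : ZMod n) = v + d by
    obtain ⟨h, ht, d, hd, he⟩ := this
    refine ⟨i + ((h * k : ℕ) : ZMod n), Finset.mem_inter.2
      ⟨Finset.mem_image.2 ⟨h, Finset.mem_range.2 ht, rfl⟩,
       Finset.mem_image.2 ⟨d, Finset.mem_range.2 hd, by rw [he, hj, add_assoc]⟩⟩⟩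
  -- `h * k` is the first multiple of `k` at or after `v`; if it wraps past `n`, use `0 ≡ n`.
  set h := (v + k - 1) / k
  have hvh : v ≤ h * k := mul_comm k h ▸ (ceilDiv_le_iff_le_mul hk).1 le_rfl
  have hhv : h * k ≤ v + k - 1 := Nat.div_mul_le_self _ _
  by_cases hht : h < t
  · refine ⟨h, hht, h * k - v, by omega, ?_⟩
    rw [← Nat.cast_add, Nat.add_sub_cancel' hvh]
  · have : k * t ≤ h * k := mul_comm h k ▸ Nat.mul_le_mul_left k (not_lt.1 hht)
    refine ⟨0, Nat.pos_of_mul_pos_left ((NeZero.pos n).trans_le hnt), n - v, by omega, ?_⟩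
    rw [← Nat.cast_add, Nat.add_sub_cancel' hv.le, ZMod.natCast_self, zero_mul, Nat.cast_zero]

lemma coveringNumber_eq [NeZero n] (hk : 0 < k) :
    coveringNumber n k = (n + k - 1) / k := by
  have hxcov : IsCover n k (xcov n k 0) := isCover_xcov hk 0
  unfold coveringNumber
  apply le_antisymm
  · exact Nat.sInf_le ⟨_, hxcov, le_antisymm (card_xcov_le 0) (hxcov.ceilDiv_le_card hk)⟩
  · obtain ⟨x, hx, hcard⟩ :=
      Nat.sInf_mem (⟨_, _, hxcov, rfl⟩ : ∃ m, ∃ x, IsCover n k x ∧ x.card = m)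
    exact hcard ▸ hx.ceilDiv_le_card hk

lemma IsMinimumCover.card_eq [NeZero n] (hk : 0 < k) {x : Finset (ZMod n)}
    (hx : IsMinimumCover n k x) : x.card = (n + k - 1) / k :=
  hx.2.trans (coveringNumber_eq hk)

end Cover

lemma finrank_direction_affineSpan_add_two_le {K V : Type*} [DivisionRing K] [AddCommGroup V]
    [Module K V] [FiniteDimensional K V] {S : Set V} (f g : V →ₗ[K] K) {c d : K}
    (hf : ∀ v ∈ S, f v = c) (hg : ∀ v ∈ S, g v = d) (hg0 : g ≠ 0) {u : V} (hgu : g u = 0)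
    (hfu : f u ≠ 0) :
    Module.finrank K (affineSpan K S).direction + 2 ≤ Module.finrank K V := by
  have hle : (affineSpan K S).direction ≤ LinearMap.ker f ⊓ LinearMap.ker g := by
    rw [direction_affineSpan, vectorSpan_def, Submodule.span_le]
    rintro _ ⟨v, hv, w, hw, rfl⟩
    simp [hf v hv, hf w hw, hg v hv, hg w hw]
  have hlt : LinearMap.ker f ⊓ LinearMap.ker g < LinearMap.ker g :=
    inf_le_right.lt_of_not_ge fun h => hfu (h (LinearMap.mem_ker.2 hgu)).1
  have hne : LinearMap.ker g ≠ ⊤ := fun h => hg0 (LinearMap.ker_eq_top.1 h)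
  have := Submodule.finrank_mono hle
  have := Submodule.finrank_lt_finrank_of_lt hlt
  have := Submodule.finrank_lt hne
  omega

lemma linearCombination_charVec {n : ℕ} [NeZero n] (c : ZMod n → ℝ) (x : Finset (ZMod n)) :
    Fintype.linearCombination ℝ c (charVec n x) = ∑ i ∈ x, c i := by
  simp [Fintype.linearCombination_apply, charVec, Finset.sum_ite_mem]

section Facet

variable {n k : ℕ} {a : ZMod n → ℤ} {α : ℤ}

lemma IsFacet.exists_isRoot (hn : 2 ≤ n) (hfacet : IsFacet n k a α) :
    ∃ x, IsRoot n k a α x := by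
  by_contra! hroot
  have hS : {v | ∃ x, IsRoot n k a α x ∧ v = charVec n x} = ∅ :=
    Set.eq_empty_of_forall_notMem fun _ ⟨x, hx, _⟩ => hroot x hx
  have hdim := hfacet.2
  rw [hS, AffineSubspace.span_empty, AffineSubspace.direction_bot, finrank_bot] at hdim
  omega

lemma IsFacet.exists_isRoot_card_ne [NeZero n] (hfacet : IsFacet n k a α) {i j : ZMod n}
    (hij : a i ≠ a j) (m : ℕ) : ∃ x, IsRoot n k a α x ∧ x.card ≠ m := by
  by_contra! hcard
  have hdim := finrank_direction_affineSpan_add_two_le (K := ℝ)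
    (S := {v | ∃ x, IsRoot n k a α x ∧ v = charVec n x}) (c := α) (d := m)
    (Fintype.linearCombination ℝ fun i => (a i : ℝ)) (Fintype.linearCombination ℝ 1)
    (u := Pi.single i 1 - Pi.single j 1) ?_ ?_ ?_ ?_ ?_
  · rw [hfacet.2, Module.finrank_fintype_fun_eq_card, ZMod.card] at hdim
    omega
  · rintro _ ⟨x, hx, rfl⟩
    rw [linearCombination_charVec, ← hx.2]
    push_cast
    rfl
  · rintro _ ⟨x, hx, rfl⟩
    simp [linearCombination_charVec, hcard x hx]
  · intro h
    simpa using LinearMap.congr_fun h (Pi.single i 1)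
  · simp
  · simpa [sub_eq_zero] using hij

lemma IsFacet.isRankMultiple_of_forall_eq [NeZero n] (hn : 2 ≤ n) (hk : 0 < k)
    (hfacet : IsFacet n k a α) {c : ℤ} (hc : 0 < c) (ha : ∀ j, a j = c) :
    IsRankMultiple n k a α := by
  refine ⟨c, hc, ha, le_antisymm ?_ ?_⟩
  · have hvalid := hfacet.1 _ (isCover_xcov hk 0)
    simp only [ha, Finset.sum_const, nsmul_eq_mul] at hvalid
    have hcard : ((xcov n k 0).card : ℤ) ≤ ((n + k - 1) / k : ℕ) := by
      exact_mod_cast card_xcov_le 0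
    nlinarith
  · obtain ⟨x, hx, hxα⟩ := hfacet.exists_isRoot hn
    simp only [ha, Finset.sum_const, nsmul_eq_mul] at hxα
    have hcard : (((n + k - 1) / k : ℕ) : ℤ) ≤ x.card := by exact_mod_cast hx.ceilDiv_le_card hk
    nlinarith

end Facet

theorem stmt2_general (n k : ℕ) (hn : 2 ≤ n) (hk1 : 1 ≤ k)
    (a : ZMod n → ℤ) (α : ℤ) (hpos : ∀ i : ZMod n, 1 ≤ a i)
    (hfacet : IsFacet n k a α)
    (hnonrank : ¬ IsRankMultiple n k a α)
    (a0 : ℤ) (ha0 : IsLeast (Set.range a) a0) :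
    (∃ i : ZMod n, a0 < a i) ∧ (∃ i : ZMod n, ¬ a0 < a i) ∧
    a0 * ((((n + k - 1) / k : ℕ) : ℤ) + 1) ≤ α ∧
    ∀ x : Finset (ZMod n), IsMinimumCover n k x → ∃ i ∈ x, a0 < a i := by
  have : NeZero n := ⟨by omega⟩
  obtain ⟨⟨i0, hi0⟩, hle⟩ := ha0
  have hmin : ∀ i, a0 ≤ a i := fun i => hle ⟨i, rfl⟩
  have ha0pos : 0 < a0 := hi0 ▸ hpos i0
  have hsum : ∀ x : Finset (ZMod n), a0 * x.card ≤ ∑ i ∈ x, a i := fun x => by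
    simpa [mul_comm] using x.card_nsmul_le_sum a a0 fun i _ => hmin i
  obtain ⟨w, hw⟩ : ∃ w, a0 < a w := by
    by_contra! h
    exact hnonrank <| hfacet.isRankMultiple_of_forall_eq hn hk1 ha0pos fun j =>
      le_antisymm (h j) (hmin j)
  have hα : a0 * ((((n + k - 1) / k : ℕ) : ℤ) + 1) ≤ α := by
    obtain ⟨x, ⟨hx, rfl⟩, hcard⟩ :=
      hfacet.exists_isRoot_card_ne (i := w) (j := i0) (by omega) ((n + k - 1) / k)
    have hlarge : (n + k - 1) / k + 1 ≤ x.card := by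
      have := hx.ceilDiv_le_card hk1
      omega
    calc a0 * ((((n + k - 1) / k : ℕ) : ℤ) + 1) ≤ a0 * x.card := by
          gcongr; exact_mod_cast hlarge
      _ ≤ _ := hsum x
  refine ⟨⟨w, hw⟩, ⟨i0, not_lt.2 hi0.le⟩, hα, fun x hx => ?_⟩
  by_contra! hW
  have hxsum : ∑ i ∈ x, a i = a0 * x.card := by
    rw [Finset.sum_congr rfl fun i hi => le_antisymm (hW i hi) (hmin i)]
    simp [mul_comm]
  have hvalid := hfacet.1 x hx.1
  rw [hxsum, hx.card_eq hk1] at hvalid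
  linarith

theorem stmt2 (n k : ℕ) (hn : 2 ≤ n) (hk1 : 1 ≤ k) (hk2 : k ≤ n - 1)
    (a : ZMod n → ℤ) (α : ℤ) (hpos : ∀ i : ZMod n, 1 ≤ a i)
    (hfacet : IsFacet n k a α)
    (hnonbool : ¬ IsBooleanMultiple n k a α) (hnonrank : ¬ IsRankMultiple n k a α)
    (a0 : ℤ) (ha0 : IsLeast (Set.range a) a0) :
    (∃ i : ZMod n, a0 < a i) ∧ (∃ i : ZMod n, ¬ a0 < a i) ∧
    a0 * ((((n + k - 1) / k : ℕ) : ℤ) + 1) ≤ α ∧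
    ∀ x : Finset (ZMod n), IsMinimumCover n k x → ∃ i ∈ x, a0 < a i :=
  stmt2_general n k hn hk1 a α hpos hfacet hnonrank a0 ha0
end

section
/- Let n ≥ 2, 1 ≤ k ≤ n−1, and let a·x ≥ α be a non boolean non rank facet defining inequality of Q(C_n^k) with positive integer coefficients. Then for every i ∈ Z_n there exist: (a) a root x̃ with i ∈ x̃; (b) a root x̃ with i ∉ x̃; and (c) a root x̃ with |x̃ ∩ C^i| = 2. -/
section Aux


/-- Dimension lemma: if a nonzero linear functional `f` is constant on root characteristic
vectors and `f d = 0`, then `a · d = 0`. -/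
lemma dimA (n k : ℕ) [NeZero n] (a : ZMod n → ℤ) (α : ℤ)
    (hfacet : IsFacet n k a α)
    (f : (ZMod n → ℝ) →ₗ[ℝ] ℝ) (c : ℝ)
    (hconst : ∀ x : Finset (ZMod n), IsRoot n k a α x → f (charVec n x) = c)
    (hf : f ≠ 0)
    (d : ZMod n → ℝ) (hd : f d = 0) :
    ∑ j : ZMod n, (a j : ℝ) * d j = 0 := by
  set S : Set (ZMod n → ℝ) :=
    {v : ZMod n → ℝ | ∃ x : Finset (ZMod n), IsRoot n k a α x ∧ v = charVec n x} with hS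
  -- the functional g
  set g : (ZMod n → ℝ) →ₗ[ℝ] ℝ := ∑ j : ZMod n, (a j : ℝ) • LinearMap.proj j with hg
  have hgapp : ∀ v : ZMod n → ℝ, g v = ∑ j : ZMod n, (a j : ℝ) * v j := by
    intro v; simp [hg]
  have hgconst : ∀ v ∈ S, g v = (α : ℝ) := by
    rintro v ⟨x, hx, rfl⟩
    rw [hgapp]
    push_cast
    simp only [charVec, mul_ite, mul_one, mul_zero]
    rw [Finset.sum_ite_mem, Finset.univ_inter]
    exact_mod_cast congrArg (fun z : ℤ => (z : ℝ)) hx.2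
  have hfconst : ∀ v ∈ S, f v = c := by rintro v ⟨x, hx, rfl⟩; exact hconst x hx
  have hlef : vectorSpan ℝ S ≤ LinearMap.ker f := by
    rw [vectorSpan_def, Submodule.span_le]
    rintro u hu
    rw [Set.mem_vsub] at hu
    obtain ⟨v, hv, w, hw, rfl⟩ := hu
    simp [LinearMap.mem_ker, vsub_eq_sub, hfconst v hv, hfconst w hw]
  have hleg : vectorSpan ℝ S ≤ LinearMap.ker g := by
    rw [vectorSpan_def, Submodule.span_le]
    rintro u hu
    rw [Set.mem_vsub] at hu
    obtain ⟨v, hv, w, hw, rfl⟩ := hu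
    simp [LinearMap.mem_ker, vsub_eq_sub, hgconst v hv, hgconst w hw]
  have hkerf : Module.finrank ℝ (LinearMap.ker f) = n - 1 := by
    have h1 : Module.finrank ℝ (LinearMap.range f) + Module.finrank ℝ (LinearMap.ker f) = n := by
      rw [LinearMap.finrank_range_add_finrank_ker]
      simp [Module.finrank_pi]
    have h2 : LinearMap.range f = ⊤ := by
      obtain ⟨v, hv⟩ : ∃ v, f v ≠ 0 := by
        by_contra h; push_neg at h; exact hf (LinearMap.ext h)
      rw [LinearMap.range_eq_top]
      intro r
      exact ⟨(r / f v) • v, by simp [div_mul_cancel₀, hv]⟩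
    rw [h2, finrank_top] at h1
    simp at h1
    omega
  have hdir : Module.finrank ℝ (vectorSpan ℝ S) = n - 1 := by
    have := hfacet.2
    rwa [direction_affineSpan] at this
  have heq : vectorSpan ℝ S = LinearMap.ker f :=
    Submodule.eq_of_le_of_finrank_le hlef (by rw [hkerf, hdir])
  have hdg : d ∈ LinearMap.ker g := hleg (heq ▸ (LinearMap.mem_ker.mpr hd))
  rw [LinearMap.mem_ker, hgapp] at hdg
  exact hdg

/-- injectivity of `h ↦ i + h` on `range k` when `k < n` -/
lemma add_cast_inj (n : ℕ) [NeZero n] (i : ZMod n) {h h' : ℕ} (hh : h < n) (hh' : h' < n)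
    (he : i + (h : ZMod n) = i + (h' : ZMod n)) : h = h' := by
  have : (h : ZMod n) = (h' : ZMod n) := by
    have := add_left_cancel he; exact this
  calc h = (h : ZMod n).val := (ZMod.val_cast_of_lt hh).symm
    _ = (h' : ZMod n).val := by rw [this]
    _ = h' := ZMod.val_cast_of_lt hh'

/-- Every root intersects every segment in at most 2 elements. -/
lemma root_card_le_two (n k : ℕ) (hn : 2 ≤ n) (hk1 : 1 ≤ k) (hk2 : k ≤ n - 1)
    (a : ZMod n → ℤ) (α : ℤ) (hpos : ∀ i : ZMod n, 1 ≤ a i)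
    (hvalid : IsValid n k a α) (x : Finset (ZMod n)) (hx : IsRoot n k a α x)
    (i : ZMod n) : (x ∩ Cseg n k i).card ≤ 2 := by
  haveI : NeZero n := ⟨by omega⟩
  by_contra hcard
  push_neg at hcard
  -- the set of offsets
  set T : Finset ℕ := (Finset.range k).filter (fun h => i + (h : ZMod n) ∈ x) with hT
  have himg : x ∩ Cseg n k i = T.image (fun h : ℕ => i + (h : ZMod n)) := by
    ext j
    simp only [Finset.mem_inter, Cseg, Finset.mem_image, hT, Finset.mem_filter]
    constructor
    · rintro ⟨hjx, h, hh, rfl⟩; exact ⟨h, ⟨hh, hjx⟩, rfl⟩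
    · rintro ⟨h, ⟨hh, hjx⟩, rfl⟩; exact ⟨hjx, h, hh, rfl⟩
  have hTinj : ∀ h ∈ T, ∀ h' ∈ T, i + (h : ZMod n) = i + (h' : ZMod n) → h = h' := by
    intro h hh h' hh' he
    simp only [hT, Finset.mem_filter, Finset.mem_range] at hh hh'
    exact add_cast_inj n i (by omega) (by omega) he
  have hTcard : 3 ≤ T.card := by
    rw [himg, Finset.card_image_of_injOn hTinj] at hcard
    omega
  have hTne : T.Nonempty := Finset.card_pos.mp (by omega)
  set h1 := T.min' hTne with hh1
  set h3 := T.max' hTne with hh3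
  have h13 : h1 < h3 := T.min'_lt_max'_of_card (by omega)
  have hT' : ((T.erase h1).erase h3).Nonempty := by
    rw [← Finset.card_pos]
    have e1 : h1 ∈ T := T.min'_mem hTne
    have e3 : h3 ∈ T.erase h1 := Finset.mem_erase.mpr ⟨by omega, T.max'_mem hTne⟩
    have := Finset.card_erase_of_mem e3
    have := Finset.card_erase_of_mem e1
    omega
  obtain ⟨h2, hh2⟩ := hT'
  rw [Finset.mem_erase, Finset.mem_erase] at hh2
  obtain ⟨h23, h21, h2T⟩ := hh2
  have h12 : h1 < h2 := lt_of_le_of_ne (T.min'_le h2 h2T) (Ne.symm h21)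
  have h23' : h2 < h3 := lt_of_le_of_ne (T.le_max' h2 h2T) h23
  -- memberships in x
  have hmemT : ∀ h ∈ T, h < k ∧ i + (h : ZMod n) ∈ x := by
    intro h hh; simp only [hT, Finset.mem_filter, Finset.mem_range] at hh; exact hh
  obtain ⟨h1k, j1x⟩ := hmemT h1 (T.min'_mem hTne)
  obtain ⟨h2k, j2x⟩ := hmemT h2 h2T
  obtain ⟨h3k, j3x⟩ := hmemT h3 (T.max'_mem hTne)
  set j1 : ZMod n := i + (h1 : ZMod n) with hj1def
  set j2 : ZMod n := i + (h2 : ZMod n) with hj2def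
  set j3 : ZMod n := i + (h3 : ZMod n) with hj3def
  have hj12 : j1 ≠ j2 := fun he => by
    have := add_cast_inj n i (by omega) (by omega) he; omega
  have hj32 : j3 ≠ j2 := fun he => by
    have := add_cast_inj n i (by omega) (by omega) he; omega
  -- x.erase j2 is a cover
  have hcover : IsCover n k (x.erase j2) := by
    intro m
    obtain ⟨w, hw⟩ := hx.1 m
    rw [Finset.mem_inter] at hw
    by_cases hwj : w = j2
    · -- j2 ∈ Cseg m, so j1 or j3 ∈ Cseg m
      subst hwj
      obtain ⟨t, ht, hmt⟩ : ∃ t : ℕ, t < k ∧ m + (t : ZMod n) = j2 := by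
        obtain ⟨t, ht, hmt⟩ := Finset.mem_image.mp hw.2
        exact ⟨t, Finset.mem_range.mp ht, hmt⟩
      by_cases hcase : h2 - h1 ≤ t
      · -- j1 ∈ Cseg m
        refine ⟨j1, Finset.mem_inter.mpr ⟨Finset.mem_erase.mpr ⟨hj12, j1x⟩, ?_⟩⟩
        refine Finset.mem_image.mpr ⟨t - (h2 - h1), Finset.mem_range.mpr (by omega), ?_⟩
        have hcast : ((t - (h2 - h1) : ℕ) : ZMod n) = (t : ZMod n) - (h2 : ZMod n) + (h1 : ZMod n) := by
          have : t - (h2 - h1) + (h2 - h1) = t := by omega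
          have e2 : ((h2 - h1 : ℕ) : ZMod n) = (h2 : ZMod n) - (h1 : ZMod n) :=
            Nat.cast_sub h12.le
          calc ((t - (h2 - h1) : ℕ) : ZMod n)
              = ((t : ℕ) : ZMod n) - ((h2 - h1 : ℕ) : ZMod n) := by
                rw [← Nat.cast_sub (by omega)]
            _ = (t : ZMod n) - (h2 : ZMod n) + (h1 : ZMod n) := by rw [e2]; ring
        rw [hcast]
        have : m + (t : ZMod n) = i + (h2 : ZMod n) := hmt
        calc m + ((t : ZMod n) - (h2 : ZMod n) + (h1 : ZMod n))
            = (m + (t : ZMod n)) - (h2 : ZMod n) + (h1 : ZMod n) := by ring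
          _ = i + (h2 : ZMod n) - (h2 : ZMod n) + (h1 : ZMod n) := by rw [this]
          _ = j1 := by rw [hj1def]; ring
      · -- j3 ∈ Cseg m
        push_neg at hcase
        refine ⟨j3, Finset.mem_inter.mpr ⟨Finset.mem_erase.mpr ⟨hj32, j3x⟩, ?_⟩⟩
        refine Finset.mem_image.mpr ⟨t + (h3 - h2), Finset.mem_range.mpr (by omega), ?_⟩
        have hcast : ((t + (h3 - h2) : ℕ) : ZMod n) = (t : ZMod n) + ((h3 : ZMod n) - (h2 : ZMod n)) := by
          have e2 : ((h3 - h2 : ℕ) : ZMod n) = (h3 : ZMod n) - (h2 : ZMod n) :=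
            Nat.cast_sub h23'.le
          push_cast [Nat.cast_add]
          rw [e2]
        rw [hcast]
        have hmt' : m + (t : ZMod n) = i + (h2 : ZMod n) := hmt
        calc m + ((t : ZMod n) + ((h3 : ZMod n) - (h2 : ZMod n)))
            = (m + (t : ZMod n)) + (h3 : ZMod n) - (h2 : ZMod n) := by ring
          _ = i + (h2 : ZMod n) + (h3 : ZMod n) - (h2 : ZMod n) := by rw [hmt']
          _ = j3 := by rw [hj3def]; ring
    · exact ⟨w, Finset.mem_inter.mpr ⟨Finset.mem_erase.mpr ⟨hwj, hw.1⟩, hw.2⟩⟩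
  -- sum over erased set is < α
  have hsum : ∑ i ∈ x.erase j2, a i = α - a j2 := by
    rw [Finset.sum_erase_eq_sub j2x, hx.2]
  have := hvalid _ hcover
  rw [hsum] at this
  have := hpos j2
  omega

end Aux

theorem stmt3 (n k : ℕ) (hn : 2 ≤ n) (hk1 : 1 ≤ k) (hk2 : k ≤ n - 1)
    (a : ZMod n → ℤ) (α : ℤ) (hpos : ∀ i : ZMod n, 1 ≤ a i)
    (hfacet : IsFacet n k a α)
    (hnonbool : ¬ IsBooleanMultiple n k a α) (hnonrank : ¬ IsRankMultiple n k a α) :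
    ∀ i : ZMod n,
      (∃ x : Finset (ZMod n), IsRoot n k a α x ∧ i ∈ x) ∧
      (∃ x : Finset (ZMod n), IsRoot n k a α x ∧ i ∉ x) ∧
      (∃ x : Finset (ZMod n), IsRoot n k a α x ∧ (x ∩ Cseg n k i).card = 2) := by
  haveI : NeZero n := ⟨by omega⟩
  haveI : Fact (1 < n) := ⟨by omega⟩
  intro i
  have key : ∀ j : ZMod n, ∀ d : ZMod n → ℝ,
      (∑ j' : ZMod n, (a j' : ℝ) * d j') = 0 → d = Pi.single j 1 → False := by
    intro j d hd hdef
    subst hdef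
    have : ∑ j' : ZMod n, (a j' : ℝ) * (Pi.single j 1 : ZMod n → ℝ) j' = (a j : ℝ) := by
      simp only [Pi.single_apply, mul_ite, mul_one, mul_zero]
      rw [Finset.sum_ite_eq' Finset.univ j (fun j' => (a j' : ℝ))]
      simp
    rw [this] at hd
    have : a j = 0 := by exact_mod_cast hd
    have := hpos j
    omega
  refine ⟨?_, ?_, ?_⟩
  · -- a root containing i
    by_contra hno
    push_neg at hno
    obtain ⟨j, hji⟩ := exists_ne i
    refine key j (Pi.single j 1) ?_ rfl
    refine dimA n k a α hfacet (LinearMap.proj i) 0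
      (fun x hx => by simp [charVec, hno x hx]) ?_ _ ?_
    · intro h
      have := congrArg (fun φ : (ZMod n → ℝ) →ₗ[ℝ] ℝ => φ (Pi.single i 1)) h
      simp at this
    · simp [Pi.single_apply, hji]
  · -- a root avoiding i
    by_contra hno
    push_neg at hno
    obtain ⟨j, hji⟩ := exists_ne i
    refine key j (Pi.single j 1) ?_ rfl
    refine dimA n k a α hfacet (LinearMap.proj i) 1
      (fun x hx => by simp [charVec, hno x hx]) ?_ _ ?_
    · intro h
      have := congrArg (fun φ : (ZMod n → ℝ) →ₗ[ℝ] ℝ => φ (Pi.single i 1)) h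
      simp at this
    · simp [Pi.single_apply, hji]
  · -- a root meeting Cseg i in exactly 2 elements
    by_contra hno
    push_neg at hno
    -- a coordinate outside Cseg n k i
    obtain ⟨j, hj⟩ : ∃ j : ZMod n, j ∉ Cseg n k i := by
      by_contra h
      push_neg at h
      have hsub : (Finset.univ : Finset (ZMod n)) ⊆ Cseg n k i := fun j _ => h j
      have := Finset.card_le_card hsub
      have h2 : (Cseg n k i).card ≤ k := by
        calc (Cseg n k i).card ≤ (Finset.range k).card := Finset.card_image_le
          _ = k := Finset.card_range k
      rw [Finset.card_univ, ZMod.card] at this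
      omega
    set f : (ZMod n → ℝ) →ₗ[ℝ] ℝ := ∑ j' ∈ Cseg n k i, LinearMap.proj j' with hf
    have hfapp : ∀ v : ZMod n → ℝ, f v = ∑ j' ∈ Cseg n k i, v j' := by
      intro v; simp [hf]
    have hii : i ∈ Cseg n k i := by
      refine Finset.mem_image.mpr ⟨0, Finset.mem_range.mpr (by omega), by simp⟩
    refine key j (Pi.single j 1) ?_ rfl
    refine dimA n k a α hfacet f 1 ?_ ?_ _ ?_
    · intro x hx
      have hle2 := root_card_le_two n k hn hk1 hk2 a α hpos hfacet.1 x hx i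
      have hge1 : 1 ≤ (x ∩ Cseg n k i).card := Finset.card_pos.mpr (hx.1 i)
      have hne2 := hno x hx
      have hcard1 : (x ∩ Cseg n k i).card = 1 := by omega
      rw [hfapp]
      have : ∑ j' ∈ Cseg n k i, charVec n x j' = ((Cseg n k i ∩ x).card : ℝ) := by
        simp only [charVec]
        rw [Finset.sum_boole]
        congr 1
      rw [this, Finset.inter_comm, hcard1]
      norm_num
    · intro h
      have h0 : f (Pi.single i 1) = 0 := by rw [h]; rfl
      rw [hfapp] at h0
      simp only [Pi.single_apply] at h0
      rw [Finset.sum_ite_eq' (Cseg n k i) i (fun _ => (1:ℝ))] at h0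
      simp [hii] at h0
    · rw [hfapp]
      simp only [Pi.single_apply]
      rw [Finset.sum_ite_eq' (Cseg n k i) j (fun _ => (1:ℝ))]
      simp [hj]
end

section
/- Let n ≥ 2, 1 ≤ k ≤ n−1, let a·x ≥ α be a non boolean non rank facet defining inequality of Q(C_n^k) with positive integer coefficients, set a^0 = min{a_i : i ∈ Z_n} and W = {i ∈ Z_n : a_i > a^0}. Let i ∈ W and let x̃ be a root with i ∈ x̃. Then: (a) if there exists j ∈ x̃ ∩ C^{i−k+1} with j ≠ i, then the cyclic interval [i, j+k]_n is contained in W; and (b) if there exists j ∈ x̃ ∩ C^i with j ≠ i, then the cyclic interval [j−k, i]_n is contained in W. -/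
lemma mod2aux (X n : ℕ) (h : X < 2 * n) :
    (X % n = X ∧ X < n) ∨ (X % n = X - n ∧ n ≤ X) := by
  rcases lt_or_ge X n with h1 | h1
  · exact Or.inl ⟨Nat.mod_eq_of_lt h1, h1⟩
  · exact Or.inr ⟨by rw [Nat.mod_eq_sub_mod h1, Nat.mod_eq_of_lt (by omega)], h1⟩

lemma mem_Cseg_iff {n k : ℕ} [NeZero n] (hk : k ≤ n) (j m : ZMod n) :
    j ∈ Cseg n k m ↔ (j - m).val < k := by
  simp only [Cseg, Finset.mem_image, Finset.mem_range]
  constructor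
  · rintro ⟨h, hh, rfl⟩
    rw [add_sub_cancel_left, ZMod.val_natCast, Nat.mod_eq_of_lt (lt_of_lt_of_le hh hk)]
    exact hh
  · intro hlt
    exact ⟨(j - m).val, hlt, by rw [ZMod.natCast_val, ZMod.cast_id]; ring⟩

lemma mem_cycInterval_iff {n : ℕ} [NeZero n] (a b h : ZMod n) :
    h ∈ cycInterval n a b ↔ (h - a).val ≤ (b - a).val := by
  simp only [cycInterval, Finset.mem_image, Finset.mem_range, Nat.lt_succ_iff]
  constructor
  · rintro ⟨t, ht, rfl⟩
    rw [add_sub_cancel_left, ZMod.val_natCast,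
      Nat.mod_eq_of_lt (lt_of_le_of_lt ht (ZMod.val_lt _))]
    exact ht
  · intro hle
    exact ⟨(h - a).val, hle, by rw [ZMod.natCast_val, ZMod.cast_id]; ring⟩

lemma key_a {n k : ℕ} [NeZero n] (hk1 : 1 ≤ k) (hk2 : k ≤ n - 1)
    (i j z m : ZMod n)
    (hj : (j - (i - ((k : ℕ) : ZMod n) + 1)).val < k) (hji : j ≠ i)
    (hz : (z - i).val ≤ (j + ((k : ℕ) : ZMod n) - i).val)
    (hm : (i - m).val < k) :
    (j - m).val < k ∨ (z - m).val < k := by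
  have hn2 : 2 ≤ n := by omega
  have hqn : (j - i).val < n := ZMod.val_lt _
  have hpn : (i - m).val < n := ZMod.val_lt _
  have hrn : (z - i).val < n := ZMod.val_lt _
  have hq0 : (j - i).val ≠ 0 := by
    simp only [Ne, ZMod.val_eq_zero, sub_eq_zero]; exact hji
  have e1 : j - (i - ((k : ℕ) : ZMod n) + 1) = (j - i) + (((k - 1 : ℕ)) : ZMod n) := by
    rw [Nat.cast_sub hk1]; push_cast; ring
  have hkval : (((k - 1 : ℕ)) : ZMod n).val = k - 1 := by
    rw [ZMod.val_natCast, Nat.mod_eq_of_lt (by omega)]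
  have hj' : ((j - i).val + (k - 1)) % n < k := by
    rw [e1, ZMod.val_add, hkval] at hj; exact hj
  have e2 : j + ((k : ℕ) : ZMod n) - i = (j - i) + ((k : ℕ) : ZMod n) := by ring
  have hkv : (((k : ℕ)) : ZMod n).val = k := by
    rw [ZMod.val_natCast, Nat.mod_eq_of_lt (by omega)]
  have hz' : (z - i).val ≤ ((j - i).val + k) % n := by
    rw [e2, ZMod.val_add, hkv] at hz; exact hz
  have g1 : (j - m).val = ((j - i).val + (i - m).val) % n := by
    rw [show j - m = (j - i) + (i - m) by ring, ZMod.val_add]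
  have g2 : (z - m).val = ((z - i).val + (i - m).val) % n := by
    rw [show z - m = (z - i) + (i - m) by ring, ZMod.val_add]
  rw [g1, g2]
  rcases mod2aux ((j - i).val + (k - 1)) n (by omega) with ⟨h1, h1'⟩ | ⟨h1, h1'⟩ <;>
  rcases mod2aux ((j - i).val + k) n (by omega) with ⟨h2, h2'⟩ | ⟨h2, h2'⟩ <;>
  rcases mod2aux ((j - i).val + (i - m).val) n (by omega) with ⟨h3, h3'⟩ | ⟨h3, h3'⟩ <;>
  rcases mod2aux ((z - i).val + (i - m).val) n (by omega) with ⟨h4, h4'⟩ | ⟨h4, h4'⟩ <;>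
  omega

lemma key_b {n k : ℕ} [NeZero n] (hk1 : 1 ≤ k) (hk2 : k ≤ n - 1)
    (i j z m : ZMod n)
    (hj : (j - i).val < k) (hji : j ≠ i)
    (hz : (z - (j - ((k : ℕ) : ZMod n))).val ≤ (i - (j - ((k : ℕ) : ZMod n))).val)
    (hm : (i - m).val < k) :
    (j - m).val < k ∨ (z - m).val < k := by
  have hn2 : 2 ≤ n := by omega
  have hkv : (((k : ℕ)) : ZMod n).val = k := by
    rw [ZMod.val_natCast, Nat.mod_eq_of_lt (by omega)]
  have hqn : (j - i).val < n := ZMod.val_lt _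
  have hq'n : (i - j).val < n := ZMod.val_lt _
  have hpn : (i - m).val < n := ZMod.val_lt _
  have hsn : (z - j).val < n := ZMod.val_lt _
  have hvn : (j - m).val < n := ZMod.val_lt _
  have hq0 : (j - i).val ≠ 0 := by
    simp only [Ne, ZMod.val_eq_zero, sub_eq_zero]; exact hji
  have hsum : ((j - i).val + (i - j).val) % n = 0 := by
    rw [← ZMod.val_add]
    simp
  have hz' : ((z - j).val + k) % n ≤ ((i - j).val + k) % n := by
    rw [show z - (j - ((k : ℕ) : ZMod n)) = (z - j) + ((k : ℕ) : ZMod n) by ring,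
      show i - (j - ((k : ℕ) : ZMod n)) = (i - j) + ((k : ℕ) : ZMod n) by ring,
      ZMod.val_add, ZMod.val_add, hkv] at hz
    exact hz
  have g1 : (j - m).val = ((j - i).val + (i - m).val) % n := by
    rw [show j - m = (j - i) + (i - m) by ring, ZMod.val_add]
  have g2 : (z - m).val = ((z - j).val + (j - m).val) % n := by
    rw [show z - m = (z - j) + (j - m) by ring, ZMod.val_add]
  rw [g2]
  rcases mod2aux ((j - i).val + (i - j).val) n (by omega) with ⟨h1, h1'⟩ | ⟨h1, h1'⟩ <;>
  rcases mod2aux ((z - j).val + k) n (by omega) with ⟨h2, h2'⟩ | ⟨h2, h2'⟩ <;>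
  rcases mod2aux ((i - j).val + k) n (by omega) with ⟨h3, h3'⟩ | ⟨h3, h3'⟩ <;>
  rcases mod2aux ((j - i).val + (i - m).val) n (by omega) with ⟨h4, h4'⟩ | ⟨h4, h4'⟩ <;>
  rcases mod2aux ((z - j).val + (j - m).val) n (by omega) with ⟨h5, h5'⟩ | ⟨h5, h5'⟩ <;>
  omega

lemma replace_lemma {n k : ℕ} [NeZero n] (a : ZMod n → ℤ) (α : ℤ)
    (hpos : ∀ i : ZMod n, 1 ≤ a i) (hvalid : IsValid n k a α)
    (a0 : ℤ) (ha0 : IsLeast (Set.range a) a0)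
    (i : ZMod n) (hi : a0 < a i) (x : Finset (ZMod n)) (hx : IsRoot n k a α x)
    (hix : i ∈ x) (j : ZMod n) (hjx : j ∈ x) (hji : j ≠ i) (z : ZMod n)
    (hcov : ∀ m : ZMod n, i ∈ Cseg n k m → j ∈ Cseg n k m ∨ z ∈ Cseg n k m) :
    a0 < a z := by
  by_contra hc
  push_neg at hc
  have hcover : IsCover n k (insert z (x.erase i)) := by
    intro m
    obtain ⟨t, ht⟩ := hx.1 m
    rw [Finset.mem_inter] at ht
    by_cases hti : t = i
    · subst hti
      rcases hcov m ht.2 with hjm | hzm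
      · exact ⟨j, Finset.mem_inter.mpr
          ⟨Finset.mem_insert_of_mem (Finset.mem_erase.mpr ⟨hji, hjx⟩), hjm⟩⟩
      · exact ⟨z, Finset.mem_inter.mpr ⟨Finset.mem_insert_self _ _, hzm⟩⟩
    · exact ⟨t, Finset.mem_inter.mpr
        ⟨Finset.mem_insert_of_mem (Finset.mem_erase.mpr ⟨hti, ht.1⟩), ht.2⟩⟩
  have hval := hvalid _ hcover
  have hsum_erase : ∑ t ∈ x.erase i, a t = α - a i := by
    rw [Finset.sum_erase_eq_sub hix, hx.2]
  have hbound : ∑ t ∈ insert z (x.erase i), a t ≤ α - a i + a z := by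
    by_cases hzx : z ∈ x.erase i
    · rw [Finset.insert_eq_self.mpr hzx, hsum_erase]
      have := hpos z
      linarith
    · rw [Finset.sum_insert hzx, hsum_erase]
      linarith
  linarith

theorem stmt4 (n k : ℕ) (hn : 2 ≤ n) (hk1 : 1 ≤ k) (hk2 : k ≤ n - 1)
    (a : ZMod n → ℤ) (α : ℤ) (hpos : ∀ i : ZMod n, 1 ≤ a i)
    (hfacet : IsFacet n k a α)
    (hnonbool : ¬ IsBooleanMultiple n k a α) (hnonrank : ¬ IsRankMultiple n k a α)
    (a0 : ℤ) (ha0 : IsLeast (Set.range a) a0)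
    (i : ZMod n) (hi : a0 < a i)
    (x : Finset (ZMod n)) (hx : IsRoot n k a α x) (hix : i ∈ x) :
    (∀ j ∈ x, j ∈ Cseg n k (i - ((k : ℕ) : ZMod n) + 1) → j ≠ i →
      ∀ h ∈ cycInterval n i (j + ((k : ℕ) : ZMod n)), a0 < a h) ∧
    (∀ j ∈ x, j ∈ Cseg n k i → j ≠ i →
      ∀ h ∈ cycInterval n (j - ((k : ℕ) : ZMod n)) i, a0 < a h) := by
  haveI : NeZero n := ⟨by omega⟩
  have hkn : k ≤ n := by omega
  obtain ⟨hvalid, -⟩ := hfacet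
  constructor
  · intro j hjx hjC hji z hzI
    rw [mem_Cseg_iff hkn] at hjC
    rw [mem_cycInterval_iff] at hzI
    refine replace_lemma a α hpos hvalid a0 ha0 i hi x hx hix j hjx hji z ?_
    intro m him
    rw [mem_Cseg_iff hkn] at him
    rw [mem_Cseg_iff hkn, mem_Cseg_iff hkn]
    exact key_a hk1 hk2 i j z m hjC hji hzI him
  · intro j hjx hjC hji z hzI
    rw [mem_Cseg_iff hkn] at hjC
    rw [mem_cycInterval_iff] at hzI
    refine replace_lemma a α hpos hvalid a0 ha0 i hi x hx hix j hjx hji z ?_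
    intro m him
    rw [mem_Cseg_iff hkn] at him
    rw [mem_Cseg_iff hkn, mem_Cseg_iff hkn]
    exact key_b hk1 hk2 i j z m hjC hji hzI him
end

section
/- Let n ≥ 2, 1 ≤ k ≤ n−1, let a·x ≥ α be a non boolean non rank facet defining inequality of Q(C_n^k) with positive integer coefficients, set a^0 = min{a_i : i ∈ Z_n} and W = {i ∈ Z_n : a_i > a^0}. Then: (1) for every i ∈ Z_n, |C^i ∩ (Z_n ∖ W)| ≥ 2; and (2) for every i ∈ W, a_i ≤ 2a^0. -/
/-! The facet hypothesis enters only through one consequence: a weight vector `b` whose sum is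
the same on all roots must be proportional to `a`, for otherwise the roots would lie in two
independent hyperplanes. With `b` the indicator of a point, resp. of a window `C^c`, every point
lies in a root, and every window contains two points `c + q₁`, `c + q₂` (`q₁ < q₂`) of one root.
Removing a point `j` from a root and adding points meeting every window in which `j` was the only
point of the root gives a cover, so `a j` is at most the weight added. Hence `a (c + q₁)` is at
most every weight up to `k - (q₂ - q₁)` steps to its left, and `a (c + q₂)` at most every weight
as far to its right.

A window without a point of minimum weight `a₀` could then be shifted to the left forever, so
every window has one; a window with exactly one yields another whose unique minimum sits at a
larger offset, which cannot go on forever. For (2), if `i` lies in a root and `i + p`, `i + t`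
are the nearest points of weight `a₀` on either side, then `t - p ≤ k`, and exchanging `i` for
these two points gives `a i ≤ 2 a₀`. -/

open Finset

theorem mul_eq_mul_of_finrank_vectorSpan {K ι : Type*} [Field K] [Fintype ι]
    {S : Set (ι → K)} (hS : Module.finrank K (vectorSpan K S) = Fintype.card ι - 1)
    {a b : ι → K} {α β : K} (ha : ∀ v ∈ S, a ⬝ᵥ v = α) (hb : ∀ v ∈ S, b ⬝ᵥ v = β)
    (j j' : ι) : a j * b j' = a j' * b j := by
  classical
  by_contra hdet
  set f := (Matrix.of ![a, b]).mulVecLin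
  have hsurj : Function.Surjective f := by
    intro w
    -- Cramer's rule for the `2 × 2` system supported on the coordinates `j` and `j'`
    refine ⟨((w 0 * b j' - w 1 * a j') / (a j * b j' - a j' * b j)) • Pi.single j 1 +
      ((w 1 * a j - w 0 * b j) / (a j * b j' - a j' * b j)) • Pi.single j' 1, ?_⟩
    have hd : b j' * a j - a j' * b j ≠ 0 := by rw [mul_comm]; exact sub_ne_zero.2 hdet
    ext i
    fin_cases i <;> simp [f, Matrix.mulVec, dotProduct_add] <;> field_simp <;> ring
  have hker : vectorSpan K S ≤ LinearMap.ker f := by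
    rw [vectorSpan_def, Submodule.span_le]
    rintro _ ⟨v, hv, w, hw, rfl⟩
    ext i
    fin_cases i <;> simp [f, Matrix.mulVec, ha, hb, hv, hw, dotProduct_sub]
  have hrank := LinearMap.finrank_range_add_finrank_ker f
  rw [LinearMap.range_eq_top.2 hsurj, finrank_top] at hrank
  have := Submodule.finrank_mono hker
  have := Fintype.card_pos_iff.2 ⟨j⟩
  simp only [Module.finrank_fintype_fun_eq_card, Fintype.card_fin] at hrank
  omega

section Windows

variable {n k : ℕ}

theorem mem_Cseg_iff_s5 {c j : ZMod n} : j ∈ Cseg n k c ↔ ∃ p : ℤ, 0 ≤ p ∧ p < k ∧ c + p = j := by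
  simp only [Cseg, mem_image, mem_range]
  constructor
  · rintro ⟨h, hh, rfl⟩
    exact ⟨h, by omega, by omega, by simp⟩
  · rintro ⟨p, hp0, hpk, rfl⟩
    exact ⟨p.toNat, by omega, by rw [← Int.cast_natCast, Int.toNat_of_nonneg hp0]⟩

theorem add_intCast_mem_Cseg (c : ZMod n) {p q : ℤ} (hqp : q ≤ p) (hpk : p < q + k) :
    c + p ∈ Cseg n k (c + q) :=
  mem_Cseg_iff_s5.2 ⟨p - q, by omega, by omega, by push_cast; ring⟩

theorem exists_eq_add_of_mem_Cseg {c m : ZMod n} {q : ℤ} (h : c + q ∈ Cseg n k m) :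
    ∃ r : ℤ, r ≤ q ∧ q < r + k ∧ m = c + r := by
  obtain ⟨p, hp0, hpk, hp⟩ := mem_Cseg_iff_s5.1 h
  exact ⟨q - p, by omega, by omega, by push_cast; linear_combination hp⟩

theorem eq_of_add_intCast_eq {c : ZMod n} {p q : ℤ} (h : c + p = c + q) (hpq : |p - q| < n) :
    p = q := by
  have hdvd := (ZMod.intCast_eq_intCast_iff_dvd_sub p q n).1 (add_left_cancel h)
  have := Int.eq_zero_of_abs_lt_dvd hdvd (by rwa [abs_sub_comm])
  omega

theorem exists_notMem_Cseg [NeZero n] (hkn : k < n) (c : ZMod n) : ∃ j, j ∉ Cseg n k c := by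
  by_contra! h
  have hcard : (Cseg n k c).card ≤ k := card_image_le.trans (card_range k).le
  have := card_le_card fun j (_ : j ∈ univ) => h j
  rw [card_univ, ZMod.card] at this
  omega

end Windows

section Roots

variable {n k : ℕ} {a : ZMod n → ℤ} {α : ℤ} {x : Finset (ZMod n)}

theorem IsCover.erase_union (hx : IsCover n k x) {j : ZMod n} {T : Finset (ZMod n)}
    (hT : ∀ m, x ∩ Cseg n k m = {j} → (T ∩ Cseg n k m).Nonempty) :
    IsCover n k (x.erase j ∪ T) := by
  intro m
  by_cases hm : x ∩ Cseg n k m = {j}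
  · exact (hT m hm).mono (inter_subset_inter_right subset_union_right)
  · have hne : ((x ∩ Cseg n k m).erase j).Nonempty := by
      rw [nonempty_iff_ne_empty, Ne, erase_eq_empty_iff, not_or]
      exact ⟨(hx m).ne_empty, hm⟩
    rw [← erase_inter] at hne
    exact hne.mono (inter_subset_inter_right subset_union_left)

theorem IsRoot.apply_le_sum (hv : IsValid n k a α) (ha : ∀ i, 0 ≤ a i)
    (hx : IsRoot n k a α x) {j : ZMod n} (hj : j ∈ x) {T : Finset (ZMod n)}
    (hT : ∀ m, x ∩ Cseg n k m = {j} → (T ∩ Cseg n k m).Nonempty) :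
    a j ≤ ∑ t ∈ T, a t := by
  have hcover := hv _ (hx.1.erase_union hT)
  have hunion := sum_union_inter (s₁ := x.erase j) (s₂ := T) (f := a)
  have hinter : 0 ≤ ∑ t ∈ x.erase j ∩ T, a t := sum_nonneg fun i _ => ha i
  rw [sum_erase_eq_sub hj, hx.2] at hunion
  linarith

theorem IsRoot.apply_le_apply_left (hv : IsValid n k a α) (ha : ∀ i, 0 ≤ a i)
    (hx : IsRoot n k a α x) {c : ZMod n} {q₁ q₂ p : ℤ} (h₁ : c + q₁ ∈ x) (h₂ : c + q₂ ∈ x)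
    (hq : q₁ < q₂) (hqn : q₂ - q₁ < n) (hp : q₂ - k ≤ p) (hpq : p ≤ q₁) :
    a (c + q₁) ≤ a (c + p) := by
  simpa using hx.apply_le_sum hv ha h₁ (T := {c + p}) fun m hm => by
    have hmem : c + q₁ ∈ x ∩ Cseg n k m := hm ▸ mem_singleton_self _
    obtain ⟨r, hr, hrk, rfl⟩ := exists_eq_add_of_mem_Cseg (mem_inter.1 hmem).2
    have hgap : k ≤ q₂ - r := by
      by_contra! hlt
      have h₂m : c + q₂ ∈ x ∩ Cseg n k (c + r) :=
        mem_inter.2 ⟨h₂, add_intCast_mem_Cseg c (by omega) (by omega)⟩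
      rw [hm, mem_singleton] at h₂m
      have := eq_of_add_intCast_eq h₂m (abs_sub_lt_iff.2 ⟨by omega, by omega⟩)
      omega
    exact ⟨c + p,
      mem_inter.2 ⟨mem_singleton_self _, add_intCast_mem_Cseg c (by omega) (by omega)⟩⟩

theorem IsRoot.apply_le_apply_right (hv : IsValid n k a α) (ha : ∀ i, 0 ≤ a i)
    (hx : IsRoot n k a α x) {c : ZMod n} {q₁ q₂ p : ℤ} (h₁ : c + q₁ ∈ x) (h₂ : c + q₂ ∈ x)
    (hq : q₁ < q₂) (hqn : q₂ - q₁ < n) (hp : q₂ ≤ p) (hpq : p ≤ q₁ + k) :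
    a (c + q₂) ≤ a (c + p) := by
  simpa using hx.apply_le_sum hv ha h₂ (T := {c + p}) fun m hm => by
    have hmem : c + q₂ ∈ x ∩ Cseg n k m := hm ▸ mem_singleton_self _
    obtain ⟨r, hr, hrk, rfl⟩ := exists_eq_add_of_mem_Cseg (mem_inter.1 hmem).2
    have hgap : q₁ < r := by
      by_contra! hle
      have h₁m : c + q₁ ∈ x ∩ Cseg n k (c + r) :=
        mem_inter.2 ⟨h₁, add_intCast_mem_Cseg c (by omega) (by omega)⟩
      rw [hm, mem_singleton] at h₁m
      have := eq_of_add_intCast_eq h₁m (abs_sub_lt_iff.2 ⟨by omega, by omega⟩)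
      omega
    exact ⟨c + p,
      mem_inter.2 ⟨mem_singleton_self _, add_intCast_mem_Cseg c (by omega) (by omega)⟩⟩

theorem IsRoot.apply_le_add (hv : IsValid n k a α) (ha : ∀ i, 0 ≤ a i)
    (hx : IsRoot n k a α x) {c : ZMod n} (hc : c ∈ x) {p q : ℤ} (hp : p ≤ 0) (hq : 0 ≤ q)
    (hpq : q - p ≤ k) : a c ≤ a (c + p) + a (c + q) := by
  have hT := hx.apply_le_sum hv ha hc (T := {c + p, c + q}) fun m hm => by
    have hmem : c + ((0 : ℤ) : ZMod n) ∈ Cseg n k m := by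
      simpa using (mem_inter.1 (hm ▸ mem_singleton_self c : c ∈ x ∩ Cseg n k m)).2
    obtain ⟨r, hr, hrk, rfl⟩ := exists_eq_add_of_mem_Cseg hmem
    by_cases hrp : r ≤ p
    · exact ⟨c + p, mem_inter.2 ⟨by simp, add_intCast_mem_Cseg c hrp (by omega)⟩⟩
    · exact ⟨c + q, mem_inter.2 ⟨by simp, add_intCast_mem_Cseg c (by omega) (by omega)⟩⟩
  by_cases heq : c + (p : ZMod n) = c + q
  · rw [heq, pair_eq_singleton, sum_singleton] at hT
    rw [heq]
    linarith [ha (c + q)]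
  · rwa [sum_pair heq] at hT

end Roots

section Facets

variable {n k : ℕ} {a : ZMod n → ℤ} {α a₀ : ℤ}

theorem self_mem_Cseg (hk : 0 < k) (c : ZMod n) : c ∈ Cseg n k c :=
  mem_Cseg_iff_s5.2 ⟨0, le_rfl, by omega, by simp⟩

theorem dotProduct_charVec [NeZero n] (v : ZMod n → ℝ) (x : Finset (ZMod n)) :
    v ⬝ᵥ charVec n x = ∑ i ∈ x, v i := by
  simp [dotProduct, charVec]

theorem IsFacet.mul_eq_mul_of_sum_eq [NeZero n] (hf : IsFacet n k a α) {b : ZMod n → ℝ}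
    {β : ℝ} (hb : ∀ x, IsRoot n k a α x → ∑ i ∈ x, b i = β) (j j' : ZMod n) :
    (a j : ℝ) * b j' = a j' * b j := by
  have hdim : Module.finrank ℝ (vectorSpan ℝ
      {v | ∃ x, IsRoot n k a α x ∧ v = charVec n x}) = Fintype.card (ZMod n) - 1 := by
    rw [ZMod.card, ← direction_affineSpan]
    exact hf.2
  refine mul_eq_mul_of_finrank_vectorSpan hdim (a := fun i => (a i : ℝ)) (α := α) (β := β)
    ?_ ?_ j j'
  · rintro _ ⟨x, hx, rfl⟩
    rw [dotProduct_charVec]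
    exact_mod_cast hx.2
  · rintro _ ⟨x, hx, rfl⟩
    rw [dotProduct_charVec]
    exact hb x hx

theorem IsFacet.exists_root_card_inter_ne [NeZero n] (hf : IsFacet n k a α)
    {s : Finset (ZMod n)} {j j' : ZMod n} (hj : j ∈ s) (hj' : j' ∉ s) (ha : a j' ≠ 0) (m : ℕ) :
    ∃ x, IsRoot n k a α x ∧ (x ∩ s).card ≠ m := by
  classical
  by_contra! h
  have := hf.mul_eq_mul_of_sum_eq (b := fun i => if i ∈ s then 1 else 0) (β := m)
    (fun x hx => by rw [sum_boole, filter_mem_eq_inter, h x hx]) j j'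
  simp only [hj, hj', if_true, if_false, mul_zero, mul_one] at this
  exact ha (by exact_mod_cast this.symm)

theorem IsFacet.exists_root_mem [NeZero n] (hf : IsFacet n k a α) (ha : ∀ i, 0 < a i)
    (hn : 1 < n) (i : ZMod n) : ∃ x, IsRoot n k a α x ∧ i ∈ x := by
  obtain ⟨j', hj'⟩ := Fintype.exists_ne_of_one_lt_card (by rwa [ZMod.card]) i
  obtain ⟨x, hx, hcard⟩ :=
    hf.exists_root_card_inter_ne (mem_singleton_self i) (by simpa using hj') (ha j').ne' 0
  exact ⟨x, hx, by_contra fun hi => hcard (by simp [hi])⟩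

theorem IsFacet.exists_root_two_mem_Cseg [NeZero n] (hf : IsFacet n k a α)
    (ha : ∀ i, 0 < a i) (hk : 0 < k) (hkn : k < n) (c : ZMod n) :
    ∃ x, IsRoot n k a α x ∧
      ∃ q₁ q₂ : ℤ, 0 ≤ q₁ ∧ q₁ < q₂ ∧ q₂ < k ∧ c + q₁ ∈ x ∧ c + q₂ ∈ x := by
  obtain ⟨j', hj'⟩ := exists_notMem_Cseg hkn c
  obtain ⟨x, hx, hcard⟩ :=
    hf.exists_root_card_inter_ne (self_mem_Cseg hk c) hj' (ha j').ne' 1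
  obtain ⟨u, hu, v, hv, huv⟩ :=
    one_lt_card.1 (lt_of_le_of_ne (card_pos.2 (hx.1 c)) (Ne.symm hcard))
  obtain ⟨hux, huc⟩ := mem_inter.1 hu
  obtain ⟨hvx, hvc⟩ := mem_inter.1 hv
  obtain ⟨p, hp, hpk, rfl⟩ := mem_Cseg_iff_s5.1 huc
  obtain ⟨q, hq, hqk, rfl⟩ := mem_Cseg_iff_s5.1 hvc
  rcases lt_or_gt_of_ne (fun h : p = q => huv (h ▸ rfl)) with hpq | hqp
  · exact ⟨x, hx, p, q, hp, hpq, hqk, hux, hvx⟩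
  · exact ⟨x, hx, q, p, hq, hqp, hpk, hvx, hux⟩

theorem IsFacet.exists_offsets_le_outward [NeZero n] (hf : IsFacet n k a α)
    (ha : ∀ i, 0 < a i) (hk : 0 < k) (hkn : k < n) (c : ZMod n) :
    ∃ q₁ q₂ : ℤ, 0 ≤ q₁ ∧ q₁ < q₂ ∧ q₂ < k ∧
      (∀ p : ℤ, q₂ - k ≤ p → p ≤ q₁ → a (c + q₁) ≤ a (c + p)) ∧
      (∀ p : ℤ, q₂ ≤ p → p ≤ q₁ + k → a (c + q₂) ≤ a (c + p)) := by
  obtain ⟨x, hx, q₁, q₂, hq₁, hq, hq₂, h₁, h₂⟩ := hf.exists_root_two_mem_Cseg ha hk hkn c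
  have ha' : ∀ i, 0 ≤ a i := fun i => (ha i).le
  exact ⟨q₁, q₂, hq₁, hq, hq₂,
    fun p hp hpq => hx.apply_le_apply_left hf.1 ha' h₁ h₂ hq (by omega) hp hpq,
    fun p hp hpq => hx.apply_le_apply_right hf.1 ha' h₁ h₂ hq (by omega) hp hpq⟩

theorem IsFacet.exists_min_mem_Cseg [NeZero n] (hf : IsFacet n k a α) (ha : ∀ i, 0 < a i)
    (hk : 0 < k) (hkn : k < n) (ha₀ : IsLeast (Set.range a) a₀) (c : ZMod n) :
    ∃ j ∈ Cseg n k c, a j = a₀ := by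
  by_contra! hc
  have hfree : ∀ m : ℕ, ∀ j ∈ Cseg n k (c - m), a₀ < a j := by
    intro m
    induction m with
    | zero => simpa using fun j hj => lt_of_le_of_ne (ha₀.2 ⟨j, rfl⟩) (hc j hj).symm
    | succ m ih =>
      obtain ⟨q₁, q₂, hq₁, hq, hq₂, hL, -⟩ := hf.exists_offsets_le_outward ha hk hkn (c - m)
      have hprev : a₀ < a (c - m + (-1 : ℤ)) :=
        (ih _ (mem_Cseg_iff_s5.2 ⟨q₁, hq₁, by omega, rfl⟩)).trans_le (hL (-1) (by omega) (by omega))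
      intro j hj
      obtain ⟨p, hp, hpk, rfl⟩ := mem_Cseg_iff_s5.1 hj
      rcases hp.eq_or_lt with rfl | hp
      · convert hprev using 2
        push_cast
        ring
      · convert ih _ (mem_Cseg_iff_s5.2 ⟨p - 1, by omega, by omega, rfl⟩) using 2
        push_cast
        ring
  obtain ⟨w, hw⟩ := ha₀.1
  refine (hfree (c - w).val w ?_).ne' hw
  rw [ZMod.natCast_zmod_val, sub_sub_cancel]
  exact self_mem_Cseg hk w

end Facets

def IsUniqueMinOffset {n : ℕ} (k : ℕ) (a : ZMod n → ℤ) (a₀ : ℤ) (c : ZMod n) (π : ℤ) : Prop :=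
  0 ≤ π ∧ π < k ∧ ∀ p : ℤ, 0 ≤ p → p < k → (a (c + p) = a₀ ↔ p = π)

section Minima

variable {n k : ℕ} {a : ZMod n → ℤ} {α a₀ : ℤ} {c : ZMod n} {π : ℤ}

theorem IsUniqueMinOffset.apply_eq (hc : IsUniqueMinOffset k a a₀ c π) : a (c + π) = a₀ :=
  (hc.2.2 π hc.1 hc.2.1).2 rfl

theorem IsUniqueMinOffset.eq_of_apply_eq (hc : IsUniqueMinOffset k a a₀ c π) {p : ℤ}
    (hp : 0 ≤ p) (hpk : p < k) (he : a (c + p) = a₀) : p = π :=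
  (hc.2.2 p hp hpk).1 he

theorem IsUniqueMinOffset.eq_of_apply_le (hc : IsUniqueMinOffset k a a₀ c π)
    (ha₀ : IsLeast (Set.range a) a₀) {p q : ℤ} (hp : a (c + p) = a₀) (hq : 0 ≤ q) (hqk : q < k)
    (hle : a (c + q) ≤ a (c + p)) : q = π :=
  hc.eq_of_apply_eq hq hqk (le_antisymm (hp ▸ hle) (ha₀.2 ⟨_, rfl⟩))

theorem IsFacet.exists_isUniqueMinOffset_lt [NeZero n] (hf : IsFacet n k a α)
    (ha : ∀ i, 0 < a i) (hk : 0 < k) (hkn : k < n) (ha₀ : IsLeast (Set.range a) a₀)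
    (hc : IsUniqueMinOffset k a a₀ c π) :
    ∃ c' π', π < π' ∧ IsUniqueMinOffset k a a₀ c' π' := by
  have hπ : 0 ≤ π := hc.1
  have hπk : π < k := hc.2.1
  obtain ⟨q₁, q₂, hq₁, hq, hq₂, hL, hR⟩ := hf.exists_offsets_le_outward ha hk hkn c
  have hleft : ∀ p, q₂ - k ≤ p → p ≤ q₁ → a (c + p) = a₀ → q₁ = π :=
    fun p hp hpq he => hc.eq_of_apply_le ha₀ he hq₁ (by omega) (hL p hp hpq)
  have hright : ∀ p, q₂ ≤ p → p ≤ q₁ + k → a (c + p) = a₀ → q₂ = π :=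
    fun p hp hpq he => hc.eq_of_apply_le ha₀ he (by omega) hq₂ (hR p hp hpq)
  have hshift : ∀ p : ℤ, 0 ≤ p → p < k → a (c + (q₂ - k : ℤ) + p) = a₀ →
      q₂ - k + p = π ∨ q₁ = π := by
    intro p hp hpk he
    rw [add_assoc, ← Int.cast_add] at he
    by_cases h0 : 0 ≤ q₂ - k + p
    · exact .inl (hc.eq_of_apply_eq h0 (by omega) he)
    · exact .inr (hleft _ (by omega) (by omega) he)
  rcases lt_trichotomy π q₁ with h₁ | h₁ | h₁
  · exact absurd (hleft π (by omega) h₁.le hc.apply_eq) h₁.ne'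
  · exfalso
    obtain ⟨j, hj, hja⟩ := hf.exists_min_mem_Cseg ha hk hkn ha₀ (c + (π + 1 : ℤ))
    obtain ⟨p, hp, hpk, rfl⟩ := mem_Cseg_iff_s5.1 hj
    rw [add_assoc, ← Int.cast_add] at hja
    by_cases hin : π + 1 + p < k
    · have := hc.eq_of_apply_eq (by omega) hin hja
      omega
    · have := hright _ (by omega) (by omega) hja
      omega
  rcases lt_trichotomy π q₂ with h₂ | h₂ | h₂
  · refine ⟨c + (q₂ - k : ℤ), π - (q₂ - k), by omega, by omega, by omega,
      fun p hp hpk => ⟨fun he => ?_, fun he => ?_⟩⟩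
    · rcases hshift p hp hpk he with h | h <;> omega
    · rw [he, add_assoc, ← Int.cast_add, add_sub_cancel]
      exact hc.apply_eq
  · exfalso
    obtain ⟨j, hj, hja⟩ := hf.exists_min_mem_Cseg ha hk hkn ha₀ (c + (q₂ - k : ℤ))
    obtain ⟨p, hp, hpk, rfl⟩ := mem_Cseg_iff_s5.1 hj
    rcases hshift p hp hpk hja with h | h <;> omega
  · exact absurd (hright π h₂.le (by omega) hc.apply_eq) h₂.ne

theorem IsFacet.not_isUniqueMinOffset [NeZero n] (hf : IsFacet n k a α)
    (ha : ∀ i, 0 < a i) (hk : 0 < k) (hkn : k < n) (ha₀ : IsLeast (Set.range a) a₀)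
    (c : ZMod n) (π : ℤ) : ¬ IsUniqueMinOffset k a a₀ c π := by
  suffices h : ∀ m : ℕ, ∀ c π, IsUniqueMinOffset k a a₀ c π → π + m < k by
    intro hc
    have := h k c π hc
    have := hc.1
    omega
  intro m
  induction m with
  | zero => exact fun c π hc => by simpa using hc.2.1
  | succ m ih =>
    intro c π hc
    obtain ⟨c', π', hlt, hc'⟩ := hf.exists_isUniqueMinOffset_lt ha hk hkn ha₀ hc
    have := ih c' π' hc'
    push_cast
    omega

theorem IsFacet.two_le_card_filter_not_lt [NeZero n] (hf : IsFacet n k a α)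
    (ha : ∀ i, 0 < a i) (hk : 0 < k) (hkn : k < n) (ha₀ : IsLeast (Set.range a) a₀)
    (c : ZMod n) : 2 ≤ ((Cseg n k c).filter (fun j => ¬ a₀ < a j)).card := by
  by_contra h
  obtain ⟨j, hj, hja⟩ := hf.exists_min_mem_Cseg ha hk hkn ha₀ c
  obtain ⟨π, hπ, hπk, rfl⟩ := mem_Cseg_iff_s5.1 hj
  have hmem : ∀ q : ℤ, 0 ≤ q → q < k → a (c + q) = a₀ →
      c + (q : ZMod n) ∈ (Cseg n k c).filter (fun j => ¬ a₀ < a j) :=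
    fun q hq hqk he => mem_filter.2 ⟨mem_Cseg_iff_s5.2 ⟨q, hq, hqk, rfl⟩, he ▸ lt_irrefl _⟩
  refine hf.not_isUniqueMinOffset ha hk hkn ha₀ c π
    ⟨hπ, hπk, fun p hp hpk => ⟨fun he => ?_, fun he => he ▸ hja⟩⟩
  have := card_le_one.1 (by omega) _ (hmem p hp hpk he) _ (hmem π hπ hπk hja)
  exact eq_of_add_intCast_eq this (abs_sub_lt_iff.2 ⟨by omega, by omega⟩)

theorem IsFacet.le_two_mul_of_lt [NeZero n] (hf : IsFacet n k a α)
    (ha : ∀ i, 0 < a i) (hk : 0 < k) (hkn : k < n) (ha₀ : IsLeast (Set.range a) a₀)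
    {i : ZMod n} (hi : a₀ < a i) : a i ≤ 2 * a₀ := by
  classical
  obtain ⟨x, hx, hix⟩ := hf.exists_root_mem ha (by omega) i
  obtain ⟨t, ⟨ht, hta⟩, htmin⟩ : ∃ t : ℤ, (0 < t ∧ a (i + t) = a₀) ∧
      ∀ t' : ℤ, 0 < t' ∧ a (i + t') = a₀ → t ≤ t' := by
    refine Int.exists_least_of_bdd ⟨1, fun t ht => ht.1⟩ ?_
    obtain ⟨j, hj, hja⟩ := hf.exists_min_mem_Cseg ha hk hkn ha₀ (i + (1 : ℤ))
    obtain ⟨p, hp, -, rfl⟩ := mem_Cseg_iff_s5.1 hj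
    exact ⟨1 + p, by omega, by rwa [Int.cast_add, ← add_assoc]⟩
  obtain ⟨j, hj, hja⟩ := hf.exists_min_mem_Cseg ha hk hkn ha₀ (i + (t - k : ℤ))
  obtain ⟨p, hp, hpk, rfl⟩ := mem_Cseg_iff_s5.1 hj
  rw [add_assoc, ← Int.cast_add] at hja
  have hneg : t - k + p < 0 := by
    by_contra! h
    rcases h.eq_or_lt with h | h
    · rw [← h, Int.cast_zero, add_zero] at hja
      omega
    · have := htmin _ ⟨h, hja⟩
      omega
  have := hx.apply_le_add hf.1 (fun j => (ha j).le) hix hneg.le ht.le (by omega)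
  rw [hja, hta] at this
  omega

end Minima

theorem stmt5_general (n k : ℕ) (hk1 : 1 ≤ k) (hk2 : k ≤ n - 1)
    (a : ZMod n → ℤ) (α : ℤ) (hpos : ∀ i : ZMod n, 1 ≤ a i)
    (hfacet : IsFacet n k a α)
    (a0 : ℤ) (ha0 : IsLeast (Set.range a) a0) :
    (∀ i : ZMod n, 2 ≤ ((Cseg n k i).filter (fun j => ¬ a0 < a j)).card) ∧
    (∀ i : ZMod n, a0 < a i → a i ≤ 2 * a0) := by
  have hkn : k < n := by omega
  have : NeZero n := ⟨by omega⟩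
  exact ⟨hfacet.two_le_card_filter_not_lt hpos hk1 hkn ha0,
    fun i => hfacet.le_two_mul_of_lt hpos hk1 hkn ha0⟩

theorem stmt5 (n k : ℕ) (hn : 2 ≤ n) (hk1 : 1 ≤ k) (hk2 : k ≤ n - 1)
    (a : ZMod n → ℤ) (α : ℤ) (hpos : ∀ i : ZMod n, 1 ≤ a i)
    (hfacet : IsFacet n k a α)
    (hnonbool : ¬ IsBooleanMultiple n k a α) (hnonrank : ¬ IsRankMultiple n k a α)
    (a0 : ℤ) (ha0 : IsLeast (Set.range a) a0) :
    (∀ i : ZMod n, 2 ≤ ((Cseg n k i).filter (fun j => ¬ a0 < a j)).card) ∧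
    (∀ i : ZMod n, a0 < a i → a i ≤ 2 * a0) :=
  stmt5_general n k hk1 hk2 a α hpos hfacet a0 ha0
end

section
/- Let k' ≥ 2, h ≥ 1 and 1 ≤ r ≤ k'−1 be integers and set n' = hk' + r. Then there exist positive integers s and k satisfying s·k' ≤ n' and n'·(k+1) ≤ s·k·(k'+1) if and only if r ≤ h−1. -/
theorem stmt6 (k' h r : ℕ) (hk' : 2 ≤ k') (hh : 1 ≤ h) (hr1 : 1 ≤ r) (hr2 : r ≤ k' - 1) :
    (∃ s k : ℕ, 1 ≤ s ∧ 1 ≤ k ∧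
        s * k' ≤ h * k' + r ∧ (h * k' + r) * (k + 1) ≤ s * k * (k' + 1)) ↔
      r ≤ h - 1 := by
  constructor
  · rintro ⟨s, k, hs, hk, h1, h2⟩
    have hrk : r < k' := by omega
    have hsh : s ≤ h := by nlinarith
    have h3 : (h * k' + r) * (k + 1) ≤ h * k * (k' + 1) :=
      h2.trans (by gcongr)
    have : r < h := by nlinarith
    omega
  · intro hle
    refine ⟨h, h * k' + r, hh, by nlinarith, by omega, ?_⟩
    have key : (h * k' + r) * (h * k' + r + 1) ≤ (h * k' + r) * (h * k' + h) :=
      Nat.mul_le_mul_left _ (by omega)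
    calc (h * k' + r) * (h * k' + r + 1) ≤ (h * k' + r) * (h * k' + h) := key
      _ = h * (h * k' + r) * (k' + 1) := by ring
end

section
/- Let s ≥ 2 and k ≥ 3 be integers and let ∑_{i∈W} a_i x_i + a^0 ∑_{i∉W} x_i ≥ (s+1)a^0 be an (s+1)-inequality of Q(C_{sk}^k) that is valid for Q(C_{sk}^k). Then every root x̃ of this inequality satisfies |x̃| ∈ {s, s+1}; moreover, x̃ ∩ W ≠ ∅ if and only if |x̃| = s (i.e. x̃ is a minimum cover), and in that case x̃ = x^i for every i ∈ x̃ ∩ W. -/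
/-!
A cover of `C_{sk}^k` meets each of the `s` disjoint blocks `i + [tk, tk + k)`, so it has at
least `s` elements, and a cover with exactly `s` elements has exactly one in each block. If it
contains `i`, the window starting at `i + tk + 1` then forces its element of block `t + 1` to be
`i + (t + 1)k`, so the cover is `x^i`. For a root `x`, the weights are `a⁰` off `W` and at least
`a⁰ + 1` on `W`, so `(s + 1)a⁰ ≥ |x| a⁰ + |x ∩ W|`: hence `|x| ≤ s + 1`, and `|x| = s` exactly
when `x` meets `W`.
-/

open Finset

lemma sum_ite_mem_eq_card_mul_add {ι : Type*} [DecidableEq ι] (x W : Finset ι) (a : ι → ℤ)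
    (a0 : ℤ) :
    ∑ i ∈ x, (if i ∈ W then a i else a0) = x.card * a0 + ∑ i ∈ x ∩ W, (a i - a0) := by
  rw [← sum_ite_mem, ← nsmul_eq_mul, ← sum_const, ← sum_add_distrib]
  exact sum_congr rfl fun i _ => by split_ifs <;> ring

lemma card_inter_le_sum_sub {ι : Type*} [DecidableEq ι] (x : Finset ι) {W : Finset ι}
    {a : ι → ℤ} {a0 : ℤ} (ha : ∀ i ∈ W, a0 + 1 ≤ a i) :
    ((x ∩ W).card : ℤ) ≤ ∑ i ∈ x ∩ W, (a i - a0) := by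
  simpa using card_nsmul_le_sum (x ∩ W) (fun i => a i - a0) 1
    fun i hi => by linarith [ha i (mem_inter.mp hi).2]

lemma ZMod.val_add_natCast_sub_self {n : ℕ} (i : ZMod n) {m : ℕ} (hm : m < n) :
    (i + m - i).val = m := by
  rw [add_sub_cancel_left, ZMod.val_cast_of_lt hm]

lemma IsCover.exists_mem_val_sub_mem_Ico {n k : ℕ} {x : Finset (ZMod n)} (hx : IsCover n k x)
    (i : ZMod n) {m : ℕ} (hm : m + k ≤ n) :
    ∃ j ∈ x, m ≤ (j - i).val ∧ (j - i).val < m + k := by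
  obtain ⟨j, hj⟩ := hx (i + m)
  obtain ⟨hjx, hjC⟩ := mem_inter.mp hj
  obtain ⟨r, hr, rfl⟩ := mem_image.mp hjC
  have hr : r < k := mem_range.mp hr
  refine ⟨_, hjx, ?_⟩
  rw [add_assoc, ← Nat.cast_add, ZMod.val_add_natCast_sub_self i (by omega)]
  omega

lemma xcov_mul_eq_image {s k : ℕ} (hk : 0 < k) (i : ZMod (s * k)) :
    xcov (s * k) k i = (range s).image fun t => i + ((t * k : ℕ) : ZMod (s * k)) := by
  rw [xcov, show s * k + k - 1 = (k - 1) + s * k by omega, Nat.add_mul_div_right _ _ hk,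
    Nat.div_eq_of_lt (by omega), zero_add]

section Blocks

variable {s k : ℕ} [NeZero (s * k)] {x : Finset (ZMod (s * k))}

lemma IsCover.image_val_sub_div_eq_range (hx : IsCover (s * k) k x) (i : ZMod (s * k)) :
    x.image (fun j => (j - i).val / k) = range s := by
  refine Subset.antisymm (fun t ht => ?_) (fun t ht => ?_)
  · obtain ⟨j, -, rfl⟩ := mem_image.mp ht
    exact mem_range.mpr (Nat.div_lt_of_lt_mul ((ZMod.val_lt _).trans_eq (mul_comm _ _)))
  · have ht : t + 1 ≤ s := mem_range.mp ht
    obtain ⟨j, hjx, hlo, hhi⟩ :=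
      hx.exists_mem_val_sub_mem_Ico i (m := t * k) (by nlinarith)
    exact mem_image.mpr ⟨j, hjx, Nat.div_eq_of_lt_le hlo (by linarith)⟩

lemma IsCover.le_card (hx : IsCover (s * k) k x) : s ≤ x.card := by
  calc s = (x.image fun j => (j - 0).val / k).card := by
        rw [hx.image_val_sub_div_eq_range 0, card_range]
    _ ≤ x.card := card_image_le

lemma IsCover.injOn_val_sub_div (hx : IsCover (s * k) k x) (hcard : x.card = s)
    (i : ZMod (s * k)) : Set.InjOn (fun j => (j - i).val / k) x := by
  rw [← card_image_iff, hx.image_val_sub_div_eq_range i, card_range, hcard]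

lemma IsCover.add_mul_mem_of_card_eq (hx : IsCover (s * k) k x) (hcard : x.card = s)
    {i : ZMod (s * k)} (hi : i ∈ x) {t : ℕ} (ht : t < s) :
    i + ((t * k : ℕ) : ZMod (s * k)) ∈ x := by
  induction t with
  | zero => simpa using hi
  | succ t ih =>
    have hk : 0 < k := Nat.pos_of_ne_zero (right_ne_zero_of_mul (NeZero.ne (s * k)))
    have hprev := ih (by omega)
    obtain ⟨j, hjx, hlo, hhi⟩ :=
      hx.exists_mem_val_sub_mem_Ico i (m := t * k + 1) (by nlinarith)
    have hj : j = i + (((j - i).val : ℕ) : ZMod (s * k)) := by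
      rw [ZMod.natCast_zmod_val, add_sub_cancel]
    rcases (show (j - i).val < (t + 1) * k ∨ (j - i).val = (t + 1) * k by
      rw [add_mul, one_mul]; omega) with hlt | heq
    · -- `j` and `i + t k` would be two elements of `x` in the same block of length `k`
      have hval : (i + ((t * k : ℕ) : ZMod (s * k)) - i).val = t * k :=
        ZMod.val_add_natCast_sub_self i (by nlinarith)
      have := hx.injOn_val_sub_div hcard i hjx hprev
        (by simp only [hval, Nat.mul_div_cancel _ hk, Nat.div_eq_of_lt_le (by omega) hlt])
      rw [this, hval] at hlo
      omega
    · rwa [hj, heq] at hjx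

lemma IsCover.eq_xcov_of_card_eq (hx : IsCover (s * k) k x) (hcard : x.card = s)
    {i : ZMod (s * k)} (hi : i ∈ x) : x = xcov (s * k) k i := by
  have hk : 0 < k := Nat.pos_of_ne_zero (right_ne_zero_of_mul (NeZero.ne (s * k)))
  rw [xcov_mul_eq_image hk]
  refine eq_of_subset_of_card_le (fun j hj => ?_)
    (card_image_le.trans_eq (by rw [card_range, hcard]))
  set t := (j - i).val / k
  have ht : t < s := mem_range.mp (hx.image_val_sub_div_eq_range i ▸ mem_image_of_mem _ hj)
  have hval : (i + ((t * k : ℕ) : ZMod (s * k)) - i).val = t * k :=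
    ZMod.val_add_natCast_sub_self i (by nlinarith)
  have := hx.injOn_val_sub_div hcard i hj (hx.add_mul_mem_of_card_eq hcard hi ht)
    (by simp only [hval, Nat.mul_div_cancel _ hk, t])
  exact mem_image.mpr ⟨t, mem_range.mpr ht, this.symm⟩

end Blocks

theorem stmt8_general (s k : ℕ) (hs : 2 ≤ s) (hk : 3 ≤ k)
    (W : Finset (ZMod (s * k)))
    (a : ZMod (s * k) → ℤ) (a0 : ℤ) (ha0 : 1 ≤ a0)
    (ha : ∀ i ∈ W, a0 + 1 ≤ a i ∧ a i ≤ 2 * a0)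
    (x : Finset (ZMod (s * k)))
    (hroot : IsRoot (s * k) k (fun i => if i ∈ W then a i else a0) (((s : ℤ) + 1) * a0) x) :
    (x.card = s ∨ x.card = s + 1) ∧
    ((∃ i ∈ x, i ∈ W) ↔ x.card = s) ∧
    (∀ i ∈ x, i ∈ W → x = xcov (s * k) k i) := by
  have : NeZero (s * k) := ⟨Nat.mul_ne_zero (by omega) (by omega)⟩
  obtain ⟨hcov, hsum⟩ := hroot
  rw [sum_ite_mem_eq_card_mul_add] at hsum
  have hs_le : s ≤ x.card := hcov.le_card
  have hW := card_inter_le_sum_sub x fun i hi => (ha i hi).1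
  have hle : x.card ≤ s + 1 := by
    by_contra! h
    have : ((s : ℤ) + 2) * a0 ≤ x.card * a0 := by gcongr; exact_mod_cast h
    linarith
  have hiff : (∃ i ∈ x, i ∈ W) ↔ x.card = s := by
    rw [show (∃ i ∈ x, i ∈ W) ↔ 0 < (x ∩ W).card by simp [card_pos, Finset.Nonempty]]
    constructor
    · intro hpos
      have : (1 : ℤ) ≤ (x ∩ W).card := by exact_mod_cast hpos
      by_contra hne
      rw [show x.card = s + 1 by omega] at hsum
      push_cast at hsum
      linarith
    · intro hcard
      by_contra hzero
      rw [card_eq_zero.mp (Nat.eq_zero_of_not_pos hzero), sum_empty, hcard] at hsum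
      linarith
  exact ⟨by omega, hiff, fun i hix hiW =>
    hcov.eq_xcov_of_card_eq (hiff.mp ⟨i, hix, hiW⟩) hix⟩

theorem stmt8 (s k : ℕ) (hs : 2 ≤ s) (hk : 3 ≤ k)
    (W : Finset (ZMod (s * k))) (hWne : W.Nonempty) (hWproper : ∃ i : ZMod (s * k), i ∉ W)
    (a : ZMod (s * k) → ℤ) (a0 : ℤ) (ha0 : 1 ≤ a0)
    (ha : ∀ i ∈ W, a0 + 1 ≤ a i ∧ a i ≤ 2 * a0)
    (hvalid : IsValid (s * k) k (fun i => if i ∈ W then a i else a0) (((s : ℤ) + 1) * a0))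
    (x : Finset (ZMod (s * k)))
    (hroot : IsRoot (s * k) k (fun i => if i ∈ W then a i else a0) (((s : ℤ) + 1) * a0) x) :
    (x.card = s ∨ x.card = s + 1) ∧
    ((∃ i ∈ x, i ∈ W) ↔ x.card = s) ∧
    (∀ i ∈ x, i ∈ W → x = xcov (s * k) k i) :=
  stmt8_general s k hs hk W a a0 ha0 ha x hroot
end

section
/- Let s ≥ 2 and k ≥ 2 be integers and let W ⊆ Z_{sk} satisfy |W ∩ x^j| = 1 for every j ∈ Z_{sk}. Then the inequality 2∑_{i∈W} x_i + ∑_{i∉W} x_i ≥ s+1 is valid for Q(C_{sk}^k); equivalently, every cover x of C_{sk}^k satisfies |x| + |x ∩ W| ≥ s+1. -/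
lemma natDivMod {k t ρ v : ℕ} (hk : 0 < k) (hρ : ρ < k) (hv : v = t * k + ρ) :
    v / k = t ∧ v % k = ρ := by
  constructor
  · rw [show v = ρ + t * k by omega, Nat.add_mul_div_right ρ t hk, Nat.div_eq_of_lt hρ]
    omega
  · rw [show v = ρ + t * k by omega, Nat.add_mul_mod_self_right, Nat.mod_eq_of_lt hρ]

theorem stmt9 (s k : ℕ) (hs : 2 ≤ s) (hk : 2 ≤ k)
    (W : Finset (ZMod (s * k)))
    (hW : ∀ j : ZMod (s * k), (W ∩ xcov (s * k) k j).card = 1)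
    (x : Finset (ZMod (s * k))) (hx : IsCover (s * k) k x) :
    s + 1 ≤ x.card + (x ∩ W).card := by
  by_contra hcon
  push_neg at hcon
  haveI : NeZero (s * k) := ⟨Nat.mul_ne_zero (by omega) (by omega)⟩
  have hkpos : 0 < k := by omega
  have hspos : 0 < s := by omega
  have hksk : k ≤ s * k := Nat.le_mul_of_pos_left k hspos
  -- surjectivity onto blocks
  have hsurj : ∀ t, t < s → ∃ a ∈ x, a.val / k = t := by
    intro t ht
    obtain ⟨a, ha⟩ := hx ((t * k : ℕ) : ZMod (s * k))
    rw [Finset.mem_inter] at ha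
    obtain ⟨hax, haC⟩ := ha
    simp only [Cseg, Finset.mem_image, Finset.mem_range] at haC
    obtain ⟨h, hh, hae⟩ := haC
    refine ⟨a, hax, ?_⟩
    have hmul : (t + 1) * k ≤ s * k := Nat.mul_le_mul_right k (by omega)
    have hmul' : (t + 1) * k = t * k + k := by ring
    have hlt : t * k + h < s * k := by omega
    have hac : a = ((t * k + h : ℕ) : ZMod (s * k)) := by
      rw [← hae]; push_cast; ring
    rw [hac, ZMod.val_cast_of_lt hlt]
    exact (natDivMod hkpos hh rfl).1
  -- every value's block index is < s
  have hblk : ∀ a : ZMod (s * k), a.val / k < s := by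
    intro a
    have := ZMod.val_lt a
    exact Nat.div_lt_of_lt_mul (by rw [Nat.mul_comm k s]; exact this)
  -- cardinality lower bound
  have hcard_ge : s ≤ x.card := by
    have hS : Set.SurjOn (fun a : ZMod (s * k) => a.val / k) ↑x ↑(Finset.range s) := by
      intro t ht
      simp only [Finset.coe_range, Set.mem_Iio] at ht
      obtain ⟨a, hax, ha⟩ := hsurj t ht
      exact ⟨a, hax, ha⟩
    have := Finset.card_le_card_of_surjOn _ hS
    simpa using this
  have hxc : x.card = s := by omega
  have hxW : x ∩ W = ∅ := Finset.card_eq_zero.mp (by omega)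
  -- injectivity of block index on x
  have hinj : ∀ a ∈ x, ∀ b ∈ x, a.val / k = b.val / k → a = b := by
    have himg : x.image (fun a : ZMod (s * k) => a.val / k) = Finset.range s := by
      apply Finset.Subset.antisymm
      · intro t ht
        simp only [Finset.mem_image] at ht
        obtain ⟨a, _, ha⟩ := ht
        rw [Finset.mem_range, ← ha]
        exact hblk a
      · intro t ht
        rw [Finset.mem_range] at ht
        obtain ⟨a, hax, ha⟩ := hsurj t ht
        exact Finset.mem_image.mpr ⟨a, hax, ha⟩
    have hcardimg : (x.image (fun a : ZMod (s * k) => a.val / k)).card = x.card := by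
      rw [himg, Finset.card_range, hxc]
    have hInjOn := Finset.card_image_iff.mp hcardimg
    intro a ha b hb hab
    exact hInjOn ha hb hab
  -- choose the representative of each block
  have hAex : ∀ m : ℕ, ∃ a, a ∈ x ∧ a.val / k = m % s := fun m =>
    hsurj (m % s) (Nat.mod_lt _ hspos)
  choose A hAx hAval using hAex
  have huniq : ∀ m : ℕ, ∀ b ∈ x, b.val / k = m % s → b = A m := by
    intro m b hb hbv
    exact hinj b hb (A m) (hAx m) (by rw [hbv, hAval m])
  -- step lemma: residues weakly decrease around the cycle
  have hstep : ∀ m : ℕ, (A (m + 1)).val % k ≤ (A m).val % k := by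
    intro m
    have ht : m % s < s := Nat.mod_lt _ hspos
    have hax : A m ∈ x := hAx m
    have haval : (A m).val / k = m % s := hAval m
    have hrk : (A m).val % k < k := Nat.mod_lt _ hkpos
    set t := m % s with htdef
    set r := (A m).val % k with hrdef
    have haval' : (A m).val = t * k + r := by
      have hdm := Nat.div_add_mod (A m).val k
      rw [haval, ← hrdef] at hdm
      have hcomm : k * t = t * k := by ring
      omega
    obtain ⟨b, hb⟩ := hx (A m + 1)
    rw [Finset.mem_inter] at hb
    obtain ⟨hbx, hbC⟩ := hb
    simp only [Cseg, Finset.mem_image, Finset.mem_range] at hbC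
    obtain ⟨h, hh, hbe⟩ := hbC
    have hbcast : b = (((A m).val + 1 + h : ℕ) : ZMod (s * k)) := by
      rw [← hbe]
      push_cast
      rw [ZMod.natCast_rightInverse (A m)]
    have hmod1 : (m + 1) % s = (t + 1) % s := by
      conv_lhs => rw [Nat.add_mod]
      rw [Nat.mod_eq_of_lt (show (1 : ℕ) < s by omega)]
    have hmul1 : (t + 1) * k = t * k + k := by ring
    have hmul2 : (t + 1) * k ≤ s * k := Nat.mul_le_mul_right k (by omega)
    by_cases hcase : (A m).val + 1 + h < s * k
    · -- no wraparound
      have hbval : b.val = (A m).val + 1 + h := by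
        rw [hbcast, ZMod.val_cast_of_lt hcase]
      by_cases hq : r + 1 + h < k
      · -- lands in same block: contradiction with uniqueness
        exfalso
        have hdm := natDivMod hkpos hq (show b.val = t * k + (r + 1 + h) by omega)
        have hba : b = A m := huniq m b hbx (by rw [hdm.1, htdef])
        have : b.val = (A m).val := by rw [hba]
        omega
      · -- lands in the next block
        have hts : t + 1 < s := by
          by_contra hts
          have : s * k ≤ (t + 1) * k := Nat.mul_le_mul_right k (by omega)
          omega
        have hdm := natDivMod hkpos (show r + 1 + h - k < k by omega)
          (show b.val = (t + 1) * k + (r + 1 + h - k) by omega)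
        have hba : b = A (m + 1) := huniq (m + 1) b hbx
          (by rw [hdm.1, hmod1, Nat.mod_eq_of_lt hts])
        rw [← hba, hdm.2]
        omega
    · -- wraparound: must be the last block, lands in block 0
      have hub : (A m).val + 1 + h < s * k + k := by omega
      have hbval : b.val = (A m).val + 1 + h - s * k := by
        rw [hbcast, ZMod.val_natCast, Nat.mod_eq_sub_mod (by omega),
          Nat.mod_eq_of_lt (by omega)]
      have hts : ¬ (t + 1 < s) := by
        intro hts
        have h1 : (t + 2) * k ≤ s * k := Nat.mul_le_mul_right k (by omega)
        have h2 : (t + 2) * k = t * k + k + k := by ring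
        omega
      have hsk : s * k = t * k + k := by
        rw [← hmul1]
        exact congrArg (· * k) (by omega)
      have hdm := natDivMod hkpos (show r + 1 + h - k < k by omega)
        (show b.val = 0 * k + (r + 1 + h - k) by rw [Nat.zero_mul, Nat.zero_add]; omega)
      have hba : b = A (m + 1) := huniq (m + 1) b hbx
        (by rw [hdm.1, hmod1, show t + 1 = s by omega, Nat.mod_self])
      rw [← hba, hdm.2]
      omega
  -- the residue sequence is antitone, hence constant over one period
  have hanti : Antitone (fun m => (A m).val % k) := antitone_nat_of_succ_le hstep
  have hAs0 : A s = A 0 := by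
    refine huniq 0 (A s) (hAx s) ?_
    rw [hAval s, Nat.mod_self, Nat.zero_mod]
  have hconst : ∀ m, m ≤ s → (A m).val % k = (A 0).val % k := by
    intro m hm
    have h1 : (A m).val % k ≤ (A 0).val % k := hanti (Nat.zero_le m)
    have h2 : (A s).val % k ≤ (A m).val % k := hanti hm
    rw [hAs0] at h2
    omega
  -- hence x contains the whole minimum cover xcov at A 0
  set r0 := (A 0).val % k with hr0def
  have hr0k : r0 < k := Nat.mod_lt _ hkpos
  have hA0val : (A 0).val = r0 := by
    have h0 : (A 0).val / k = 0 := by rw [hAval 0, Nat.zero_mod]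
    have hdm := Nat.div_add_mod (A 0).val k
    rw [h0, Nat.mul_zero, Nat.zero_add] at hdm
    omega
  have hAtval : ∀ t, t < s → (A t).val = t * k + r0 := by
    intro t ht
    have h1 : (A t).val / k = t := by rw [hAval t, Nat.mod_eq_of_lt ht]
    have h2 : (A t).val % k = r0 := hconst t (by omega)
    have hdm := Nat.div_add_mod (A t).val k
    rw [h1] at hdm
    have : k * t = t * k := by ring
    omega
  have hdivk : (s * k + k - 1) / k = s := by
    rw [show s * k + k - 1 = (k - 1) + s * k by omega,
      Nat.add_mul_div_right _ _ hkpos, Nat.div_eq_of_lt (by omega)]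
    omega
  have hxcov : xcov (s * k) k (A 0) ⊆ x := by
    intro c hc
    simp only [xcov, Finset.mem_image, Finset.mem_range] at hc
    obtain ⟨h, hh, hce⟩ := hc
    rw [hdivk] at hh
    have hmul : (h + 1) * k ≤ s * k := Nat.mul_le_mul_right k (by omega)
    have hmul' : (h + 1) * k = h * k + k := by ring
    have hlt : r0 + h * k < s * k := by omega
    have hcc : c = ((r0 + h * k : ℕ) : ZMod (s * k)) := by
      rw [← hce, ← hA0val]
      push_cast
      rw [ZMod.natCast_rightInverse (A 0)]
    have hcval : c.val = h * k + r0 := by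
      rw [hcc, ZMod.val_cast_of_lt hlt]
      omega
    have hcA : c = A h := by
      apply ZMod.val_injective
      rw [hcval, hAtval h hh]
    rw [hcA]
    exact hAx h
  obtain ⟨w, hw⟩ := Finset.card_eq_one.mp (hW (A 0))
  have hwmem : w ∈ W ∩ xcov (s * k) k (A 0) := hw ▸ Finset.mem_singleton_self w
  rw [Finset.mem_inter] at hwmem
  have hwx : w ∈ x ∩ W := Finset.mem_inter.mpr ⟨hxcov hwmem.2, hwmem.1⟩
  rw [hxW] at hwx
  exact absurd hwx (Finset.notMem_empty w)
end

section
/- Let s ≥ 2 and k ≥ 2 be integers and let W ⊆ Z_{sk} satisfy |W ∩ x^j| = 1 and C^j ∩ (Z_{sk} ∖ W) ≠ ∅ for every j ∈ Z_{sk}. Then there exists a simple directed cycle D in the digraph G(C_{sk}^k) having exactly k arcs of length k+1, whose heads are precisely the elements of W, and some number n_2 of arcs of length k with n_2 ≤ k(s−1) − 2; consequently s divides n_2 + k + 1 and n_1 := (n_2 + k + 1)/s satisfies 1 ≤ n_1 ≤ k − 1. -/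
/-- A simple directed cycle in the digraph `G(C_n^k)` (vertex set `ℤ_n`, arcs
`i → i+k` of length `k` and `i → i+k+1` of length `k+1`): a cyclic sequence of
`m ≥ 1` pairwise distinct vertices each consecutive pair of which is an arc. -/
structure SimpleDicycle (n k : ℕ) where
  m : ℕ
  hm : 0 < m
  v : ZMod m → ZMod n
  inj : Function.Injective v
  step : ∀ t : ZMod m,
    v (t + 1) = v t + ((k : ℕ) : ZMod n) ∨ v (t + 1) = v t + ((k + 1 : ℕ) : ZMod n)


namespace Stmt10Aux

/-- number of length-`k` steps in block `r` of the cycle -/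
def tstep (s k : ℕ) (b : ℕ → ℕ) (r : ℕ) : ℕ :=
  if r + 1 < k then (b (r + 1) + s - 1 - b r) % s else (b 0 + 2 * s - 2 - b (k - 1)) % s

/-- partial sums of block lengths -/
def psum (s k : ℕ) (b : ℕ → ℕ) (r : ℕ) : ℕ :=
  ∑ i ∈ Finset.range r, (tstep s k b i + 1)

/-- block index of position `p` -/
def blk (s k : ℕ) (b : ℕ → ℕ) (p : ℕ) : ℕ :=
  Nat.findGreatest (fun r => psum s k b r ≤ p) k

/-- offset of position `p` within its block -/
def off (s k : ℕ) (b : ℕ → ℕ) (p : ℕ) : ℕ := p - psum s k b (blk s k b p)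

/-- the vertex at position `p`, as a natural number `< s*k` -/
def Vnat (s k : ℕ) (b : ℕ → ℕ) (p : ℕ) : ℕ :=
  blk s k b p + (b (blk s k b p) + off s k b p) % s * k

section

variable {s k : ℕ} {b : ℕ → ℕ}

lemma tstep_lt (hs : 0 < s) (r : ℕ) : tstep s k b r < s := by
  unfold tstep; split <;> exact Nat.mod_lt _ hs

lemma psum_succ (r : ℕ) : psum s k b (r + 1) = psum s k b r + (tstep s k b r + 1) :=
  Finset.sum_range_succ _ r

lemma psum_strictMono : StrictMono (psum s k b) :=
  strictMono_nat_of_lt_succ fun r => by rw [psum_succ]; omega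

lemma psum_le (hs : 0 < s) (r : ℕ) : psum s k b r ≤ r * s := by
  induction r with
  | zero => simp [psum]
  | succ r ih =>
    rw [psum_succ]
    have := tstep_lt (b := b) (k := k) hs r
    calc psum s k b r + (tstep s k b r + 1) ≤ r * s + s := by omega
    _ = (r+1) * s := by ring

lemma le_psum (r : ℕ) : r ≤ psum s k b r := by
  induction r with
  | zero => simp [psum]
  | succ r ih => rw [psum_succ]; omega

lemma blk_eq {r p : ℕ} (hr : r < k) (h1 : psum s k b r ≤ p) (h2 : p < psum s k b (r + 1)) :
    blk s k b p = r := by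
  apply le_antisymm
  · by_contra h
    push_neg at h
    have h3 : psum s k b (blk s k b p) ≤ p :=
      Nat.findGreatest_spec (P := fun r => psum s k b r ≤ p) (Nat.zero_le k) (by simp [psum])
    have := (psum_strictMono (b := b) (s := s) (k := k)).monotone (show r + 1 ≤ blk s k b p by omega)
    omega
  · exact Nat.le_findGreatest hr.le h1

lemma blk_spec {p : ℕ} (hp : p < psum s k b k) :
    blk s k b p < k ∧ psum s k b (blk s k b p) ≤ p ∧ p < psum s k b (blk s k b p + 1) := by
  have h3 : psum s k b (blk s k b p) ≤ p :=
    Nat.findGreatest_spec (P := fun r => psum s k b r ≤ p) (Nat.zero_le k) (by simp [psum])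
  have hle : blk s k b p ≤ k := Nat.findGreatest_le k
  have hlt : blk s k b p < k := by
    rcases eq_or_lt_of_le hle with h | h
    · exfalso; rw [h] at h3; omega
    · exact h
  refine ⟨hlt, h3, ?_⟩
  by_contra h
  push_neg at h
  exact Nat.findGreatest_is_greatest (P := fun r => psum s k b r ≤ p)
    (Nat.lt_succ_self (blk s k b p)) (by omega) h

end
end Stmt10Aux

namespace Stmt10Aux2
open Stmt10Aux

variable {s k : ℕ} {b : ℕ → ℕ}

lemma mod_inj {s x y : ℕ} (h : x % s = y % s) (h1 : x < y + s) (h2 : y < x + s) : x = y := by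
  rcases le_total x y with hle | hle
  · have hd : s ∣ y - x := (Nat.modEq_iff_dvd' hle).mp h
    have := Nat.eq_zero_of_dvd_of_lt hd (by omega)
    omega
  · have hd : s ∣ x - y := (Nat.modEq_iff_dvd' hle).mp h.symm
    have := Nat.eq_zero_of_dvd_of_lt hd (by omega)
    omega

lemma cast_mul_k_congr (hs : 0 < s) {x y : ℕ} (h : x % s = y % s) :
    ((x * k : ℕ) : ZMod (s * k)) = ((y * k : ℕ) : ZMod (s * k)) := by
  have hx := Nat.div_add_mod x s
  have hy := Nat.div_add_mod y s
  have hx' : x * k = x % s * k + x / s * (s * k) := by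
    calc x * k = (s * (x / s) + x % s) * k := by rw [hx]
    _ = x % s * k + x / s * (s * k) := by ring
  have hy' : y * k = y % s * k + y / s * (s * k) := by
    calc y * k = (s * (y / s) + y % s) * k := by rw [hy]
    _ = y % s * k + y / s * (s * k) := by ring
  have hz : ((s : ℕ) : ZMod (s * k)) * ((k : ℕ) : ZMod (s * k)) = 0 := by
    rw [← Nat.cast_mul, ZMod.natCast_self]
  rw [hx', hy', h]
  push_cast
  linear_combination (((x / s : ℕ) : ZMod (s * k)) - ((y / s : ℕ) : ZMod (s * k))) * hz

lemma cast_sub_one_mul_k (hs : 1 ≤ s) :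
    (((s - 1) * k : ℕ) : ZMod (s * k)) = -((k : ℕ) : ZMod (s * k)) := by
  obtain ⟨s', rfl⟩ := Nat.exists_eq_add_of_le hs
  have h1 : (1 + s' - 1) = s' := by omega
  rw [h1, eq_neg_iff_add_eq_zero, ← Nat.cast_add]
  have h2 : s' * k + k = (1 + s') * k := by ring
  rw [h2, ZMod.natCast_self]

/-- the vertex at position `p` as element of `ZMod (s*k)` -/
lemma V_eq (hs : 0 < s) (p : ℕ) :
    ((Vnat s k b p : ℕ) : ZMod (s * k)) =
      ((blk s k b p : ℕ) : ZMod (s * k)) +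
        (((b (blk s k b p) + off s k b p) * k : ℕ) : ZMod (s * k)) := by
  unfold Vnat
  rw [Nat.cast_add]
  congr 1
  exact cast_mul_k_congr hs (Nat.mod_mod_of_dvd _ dvd_rfl)


variable (hs : 2 ≤ s) (hk : 2 ≤ k) (hb : ∀ r, b r < s)
include hs hk hb

lemma off_le_tstep {p : ℕ} (hp : p < psum s k b k) :
    off s k b p ≤ tstep s k b (blk s k b p) := by
  obtain ⟨h1, h2, h3⟩ := blk_spec hp
  rw [psum_succ] at h3
  unfold off
  omega

lemma Vnat_lt {p : ℕ} (hp : p < psum s k b k) : Vnat s k b p < s * k := by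
  obtain ⟨h1, h2, h3⟩ := blk_spec hp
  unfold Vnat
  have hmod : (b (blk s k b p) + off s k b p) % s < s := Nat.mod_lt _ (by omega)
  calc blk s k b p + (b (blk s k b p) + off s k b p) % s * k
      ≤ (k - 1) + (s - 1) * k := by
        have : (b (blk s k b p) + off s k b p) % s * k ≤ (s-1) * k :=
          Nat.mul_le_mul_right k (by omega)
        omega
    _ < s * k := by
        have : (s - 1) * k + k = s * k := by
          obtain ⟨s', rfl⟩ := Nat.exists_eq_add_of_le (show 1 ≤ s by omega)
          have h1 : (1 + s' - 1) = s' := by omega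
          rw [h1]; ring
        omega

lemma Vnat_inj {p q : ℕ} (hp : p < psum s k b k) (hq : q < psum s k b k)
    (h : Vnat s k b p = Vnat s k b q) : p = q := by
  obtain ⟨hp1, hp2, hp3⟩ := blk_spec hp
  obtain ⟨hq1, hq2, hq3⟩ := blk_spec hq
  have hpm : (b (blk s k b p) + off s k b p) % s < s := Nat.mod_lt _ (by omega)
  have hqm : (b (blk s k b q) + off s k b q) % s < s := Nat.mod_lt _ (by omega)
  unfold Vnat at h
  -- first components agree
  have hblk : blk s k b p = blk s k b q := by
    have h1 : (blk s k b p + (b (blk s k b p) + off s k b p) % s * k) % k = blk s k b p := by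
      rw [Nat.add_mul_mod_self_right, Nat.mod_eq_of_lt hp1]
    have h2 : (blk s k b q + (b (blk s k b q) + off s k b q) % s * k) % k = blk s k b q := by
      rw [Nat.add_mul_mod_self_right, Nat.mod_eq_of_lt hq1]
    rw [← h1, ← h2, h]
  rw [hblk] at h
  have hcoef : (b (blk s k b q) + off s k b p) % s = (b (blk s k b q) + off s k b q) % s := by
    have hk0 : 0 < k := by omega
    exact Nat.eq_of_mul_eq_mul_right hk0 (by omega)
  -- offsets agree
  have hop : off s k b p ≤ tstep s k b (blk s k b p) := off_le_tstep hs hk hb hp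
  have hoq : off s k b q ≤ tstep s k b (blk s k b q) := off_le_tstep hs hk hb hq
  have htp := tstep_lt (b := b) (k := k) (show 0 < s by omega) (blk s k b p)
  have htq := tstep_lt (b := b) (k := k) (show 0 < s by omega) (blk s k b q)
  have hoff : off s k b p = off s k b q := by
    have := mod_inj hcoef (by omega) (by omega)
    omega
  have hP : p = psum s k b (blk s k b p) + off s k b p := by unfold off; omega
  have hQ : q = psum s k b (blk s k b q) + off s k b q := by unfold off; omega
  rw [hP, hQ, hblk, hoff]

lemma step_mid {p : ℕ} (hp : p < psum s k b k)
    (hmid : p + 1 < psum s k b (blk s k b p + 1)) :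
    ((Vnat s k b (p + 1) : ℕ) : ZMod (s * k)) =
      ((Vnat s k b p : ℕ) : ZMod (s * k)) + ((k : ℕ) : ZMod (s * k)) := by
  obtain ⟨h1, h2, h3⟩ := blk_spec hp
  have hblk : blk s k b (p + 1) = blk s k b p := blk_eq h1 (by omega) hmid
  have hoff : off s k b (p + 1) = off s k b p + 1 := by unfold off; rw [hblk]; omega
  have hs0 : 0 < s := by omega
  rw [V_eq hs0, V_eq hs0, hblk, hoff]
  push_cast
  ring

lemma step_bdry_lt {p : ℕ} (hp : p < psum s k b k)
    (hbd : p + 1 = psum s k b (blk s k b p + 1)) (hlt : blk s k b p + 1 < k) :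
    ((Vnat s k b (p + 1) : ℕ) : ZMod (s * k)) =
      ((Vnat s k b p : ℕ) : ZMod (s * k)) + ((k + 1 : ℕ) : ZMod (s * k)) := by
  obtain ⟨h1, h2, h3⟩ := blk_spec hp
  have hs0 : 0 < s := by omega
  have hmono : psum s k b (blk s k b p + 1) < psum s k b (blk s k b p + 1 + 1) :=
    psum_strictMono (by omega)
  have hblk : blk s k b (p + 1) = blk s k b p + 1 := blk_eq hlt (by omega) (by omega)
  have hoff1 : off s k b (p + 1) = 0 := by unfold off; rw [hblk]; omega
  have h4 := psum_succ (s := s) (k := k) (b := b) (blk s k b p)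
  have hoffp : off s k b p = tstep s k b (blk s k b p) := by unfold off; omega
  have htr : tstep s k b (blk s k b p) = (b (blk s k b p + 1) + s - 1 - b (blk s k b p)) % s := by
    unfold tstep; rw [if_pos hlt]
  rw [V_eq hs0, V_eq hs0, hblk, hoff1, hoffp, htr]
  have hcongr : ((b (blk s k b p) + (b (blk s k b p + 1) + s - 1 - b (blk s k b p)) % s) * k : ℕ) =
      (((b (blk s k b p + 1) + (s - 1)) * k : ℕ) : ZMod (s * k)) := by
    apply cast_mul_k_congr hs0
    have hbr := hb (blk s k b p)
    have heq : b (blk s k b p) + (b (blk s k b p + 1) + s - 1 - b (blk s k b p))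
        = b (blk s k b p + 1) + (s - 1) := by omega
    conv_lhs => rw [Nat.add_mod, Nat.mod_mod_of_dvd _ dvd_rfl, ← Nat.add_mod, heq]
  rw [hcongr]
  have hsplit : (b (blk s k b p + 1) + (s - 1)) * k = b (blk s k b p + 1) * k + (s - 1) * k := by
    ring
  have h5 : ((b (blk s k b p + 1) * k + (s - 1) * k : ℕ) : ZMod (s * k)) =
      ((b (blk s k b p + 1) * k : ℕ) : ZMod (s * k)) + (((s - 1) * k : ℕ) : ZMod (s * k)) :=
    Nat.cast_add _ _
  rw [hsplit, h5, cast_sub_one_mul_k (show 1 ≤ s by omega)]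
  push_cast
  ring

lemma step_wrap {p : ℕ} (hp : p < psum s k b k)
    (hbd : p + 1 = psum s k b (blk s k b p + 1)) (hlt : blk s k b p + 1 = k) :
    ((Vnat s k b 0 : ℕ) : ZMod (s * k)) =
      ((Vnat s k b p : ℕ) : ZMod (s * k)) + ((k + 1 : ℕ) : ZMod (s * k)) := by
  obtain ⟨h1, h2, h3⟩ := blk_spec hp
  have hs0 : 0 < s := by omega
  have hblk0 : blk s k b 0 = 0 := by
    have h5 := psum_succ (s := s) (k := k) (b := b) 0
    apply blk_eq (by omega) (by simp [psum])
    simp only [psum, Finset.range_zero, Finset.sum_empty] at h5 ⊢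
    omega
  have hoff0 : off s k b 0 = 0 := by unfold off; omega
  have h4 := psum_succ (s := s) (k := k) (b := b) (blk s k b p)
  have hoffp : off s k b p = tstep s k b (blk s k b p) := by unfold off; omega
  have htr : tstep s k b (blk s k b p) = (b 0 + 2 * s - 2 - b (k - 1)) % s := by
    unfold tstep; rw [if_neg (by omega)]
  have hrk : blk s k b p = k - 1 := by omega
  rw [V_eq hs0, V_eq hs0, hblk0, hoff0, hoffp, htr, hrk]
  have hcongr : ((b (k - 1) + (b 0 + 2 * s - 2 - b (k - 1)) % s) * k : ℕ) =
      (((b 0 + ((s - 1) + (s - 1))) * k : ℕ) : ZMod (s * k)) := by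
    apply cast_mul_k_congr hs0
    have hbr := hb (k - 1)
    have heq : b (k - 1) + (b 0 + 2 * s - 2 - b (k - 1)) = b 0 + ((s - 1) + (s - 1)) := by omega
    conv_lhs => rw [Nat.add_mod, Nat.mod_mod_of_dvd _ dvd_rfl, ← Nat.add_mod, heq]
  rw [hcongr]
  have hsplit : (b 0 + ((s - 1) + (s - 1))) * k = b 0 * k + ((s - 1) * k + (s - 1) * k) := by
    ring
  have h5 : ((b 0 * k + ((s - 1) * k + (s - 1) * k) : ℕ) : ZMod (s * k)) =
      ((b 0 * k : ℕ) : ZMod (s * k)) +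
        ((((s - 1) * k : ℕ) : ZMod (s * k)) + (((s - 1) * k : ℕ) : ZMod (s * k))) := by
    push_cast
    ring
  rw [hsplit, h5, cast_sub_one_mul_k (show 1 ≤ s by omega)]
  have hk1 : ((k - 1 : ℕ) : ZMod (s * k)) = ((k : ℕ) : ZMod (s * k)) - 1 := by
    have hkk : (k - 1) + 1 = k := by omega
    have h6 : ((k - 1 : ℕ) : ZMod (s * k)) + 1 = ((k : ℕ) : ZMod (s * k)) := by
      have h7 : (((k - 1) + 1 : ℕ) : ZMod (s * k)) = ((k : ℕ) : ZMod (s * k)) := by rw [hkk]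
      push_cast at h7
      exact h7
    exact eq_sub_iff_add_eq.mpr h6
  rw [hk1]
  push_cast
  ring

lemma Vnat_start {r : ℕ} (hr : r < k) :
    ((Vnat s k b (psum s k b r) : ℕ) : ZMod (s * k)) = ((r + b r * k : ℕ) : ZMod (s * k)) := by
  have hs0 : 0 < s := by omega
  have hmono : psum s k b r < psum s k b (r + 1) := psum_strictMono (by omega)
  have hblk : blk s k b (psum s k b r) = r := blk_eq hr le_rfl hmono
  have hoff : off s k b (psum s k b r) = 0 := by unfold off; rw [hblk]; omega
  rw [V_eq hs0, hblk, hoff]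
  push_cast
  ring

omit hs hk hb in
lemma cast_sub_one_self (hs1 : 1 ≤ s) : ((s - 1 : ℕ) : ZMod s) = -1 := by
  have h : (((s - 1) + 1 : ℕ) : ZMod s) = 0 := by
    rw [show (s - 1) + 1 = s by omega, ZMod.natCast_self]
  push_cast at h
  exact eq_neg_of_add_eq_zero_left h

/-- `(tstep r : ZMod s)` for inner `r` -/
lemma tstep_cast_inner {r : ℕ} (hr : r + 1 < k) :
    ((tstep s k b r : ℕ) : ZMod s) =
      ((b (r + 1) : ℕ) : ZMod s) - ((b r : ℕ) : ZMod s) - 1 := by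
  have hbr := hb r
  unfold tstep
  rw [if_pos hr, ZMod.natCast_mod]
  have heq : b (r + 1) + s - 1 - b r = (b (r + 1) + (s - 1)) - b r := by omega
  rw [heq, Nat.cast_sub (by omega), Nat.cast_add, cast_sub_one_self (by omega)]
  ring

lemma tstep_cast_last :
    ((tstep s k b (k - 1) : ℕ) : ZMod s) =
      ((b 0 : ℕ) : ZMod s) - ((b (k - 1) : ℕ) : ZMod s) - 2 := by
  have hbr := hb (k - 1)
  unfold tstep
  rw [if_neg (by omega), ZMod.natCast_mod]
  have heq : b 0 + 2 * s - 2 - b (k - 1) = (b 0 + ((s - 1) + (s - 1))) - b (k - 1) := by omega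
  rw [heq, Nat.cast_sub (by omega), Nat.cast_add, Nat.cast_add, cast_sub_one_self (by omega)]
  ring

lemma b_cast (r : ℕ) (hr : r < k) :
    ((b r : ℕ) : ZMod s) = ((b 0 : ℕ) : ZMod s) + ((psum s k b r : ℕ) : ZMod s) := by
  induction r with
  | zero => simp [psum]
  | succ r ih =>
    have hr' : r < k := by omega
    have hps := psum_succ (s := s) (k := k) (b := b) r
    have hts := tstep_cast_inner hs hk hb (show r + 1 < k from hr)
    have := ih hr'
    rw [hps]
    push_cast
    rw [hts, this]
    ring

lemma psum_k_cast : ((psum s k b k : ℕ) : ZMod s) = -1 := by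
  have hps : psum s k b k = psum s k b (k - 1) + (tstep s k b (k - 1) + 1) := by
    have := psum_succ (s := s) (k := k) (b := b) (k - 1)
    rw [show (k - 1) + 1 = k by omega] at this
    exact this
  have hb1 := b_cast hs hk hb (k - 1) (by omega)
  rw [hps]
  push_cast
  rw [tstep_cast_last hs hk hb, hb1]
  ring

/-- consecutive `w`-relation when a block is full -/
lemma chain_rel {r : ℕ} (hr : r < k) (ht : tstep s k b r = s - 1) :
    (((r + 1) % k + b ((r + 1) % k) * k : ℕ) : ZMod (s * k)) =
      ((r + b r * k : ℕ) : ZMod (s * k)) + 1 := by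
  have hs0 : 0 < s := by omega
  by_cases hlt : r + 1 < k
  · -- inner case : b (r+1) = b r
    have htr : (b (r + 1) + s - 1 - b r) % s = s - 1 := by
      unfold tstep at ht; rwa [if_pos hlt] at ht
    have hbr := hb r
    have hbr1 := hb (r + 1)
    have hbeq : b (r + 1) = b r := by
      set x := b (r + 1) + s - 1 - b r with hx
      have hxle : x ≤ 2 * s - 2 := by omega
      have hdm := Nat.div_add_mod x s
      rw [htr] at hdm
      have hq : x / s = 0 := by
        by_contra hq
        have : s ≤ s * (x / s) := Nat.le_mul_of_pos_right s (Nat.pos_of_ne_zero hq)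
        omega
      have hsq : s * (x / s) = 0 := by rw [hq, Nat.mul_zero]
      omega
    rw [Nat.mod_eq_of_lt hlt, hbeq]
    push_cast
    ring
  · -- wrap case
    have hrk : r = k - 1 := by omega
    have htr : (b 0 + 2 * s - 2 - b (k - 1)) % s = s - 1 := by
      unfold tstep at ht; rwa [if_neg hlt] at ht
    have hbr := hb (k - 1)
    have hb0 := hb 0
    have hmod : b 0 % s = (b (k - 1) + 1) % s := by
      set x := b 0 + 2 * s - 2 - b (k - 1) with hx
      have hxle : x ≤ 3 * s - 3 := by omega
      have hdm := Nat.div_add_mod x s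
      rw [htr] at hdm
      have hq : x / s ≤ 1 := by
        by_contra hq
        have : s * 2 ≤ s * (x / s) := Nat.mul_le_mul_left s (by omega)
        omega
      rcases Nat.lt_or_ge (x / s) 1 with h0 | h1
      · have hsq : s * (x / s) = 0 := by rw [Nat.lt_one_iff.mp h0, Nat.mul_zero]
        have hb01 : b 0 = 0 ∧ b (k - 1) = s - 1 := by omega
        rw [hb01.1, show b (k - 1) + 1 = s by omega, Nat.mod_self, Nat.zero_mod]
      · have hsq : s * (x / s) = s := by rw [le_antisymm hq h1, Nat.mul_one]
        have hb01 : b 0 = b (k - 1) + 1 := by omega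
        rw [hb01]
    have hmk : (r + 1) % k = 0 := by rw [show r + 1 = k by omega, Nat.mod_self]
    rw [hmk, hrk]
    have hcg : ((b 0 * k : ℕ) : ZMod (s * k)) = (((b (k - 1) + 1) * k : ℕ) : ZMod (s * k)) :=
      cast_mul_k_congr hs0 hmod
    have hk1 : ((k - 1 : ℕ) : ZMod (s * k)) = ((k : ℕ) : ZMod (s * k)) - 1 := by
      have h7 : (((k - 1) + 1 : ℕ) : ZMod (s * k)) = ((k : ℕ) : ZMod (s * k)) := by
        rw [show (k - 1) + 1 = k by omega]
      push_cast at h7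
      exact eq_sub_iff_add_eq.mpr h7
    rw [Nat.cast_add, Nat.cast_add, hcg, hk1]
    push_cast
    ring

end Stmt10Aux2


open Stmt10Aux Stmt10Aux2 in
theorem stmt10 (s k : ℕ) (hs : 2 ≤ s) (hk : 2 ≤ k)
    (W : Finset (ZMod (s * k)))
    (hW1 : ∀ j : ZMod (s * k), (W ∩ xcov (s * k) k j).card = 1)
    (hW2 : ∀ j : ZMod (s * k), ∃ l ∈ Cseg (s * k) k j, l ∉ W) :
    ∃ D : SimpleDicycle (s * k) k, ∃ n2 : ℕ,
      Set.ncard {t : ZMod D.m | D.v (t + 1) = D.v t + ((k + 1 : ℕ) : ZMod (s * k))} = k ∧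
      {w : ZMod (s * k) | ∃ t : ZMod D.m,
          D.v (t + 1) = D.v t + ((k + 1 : ℕ) : ZMod (s * k)) ∧ w = D.v (t + 1)} = ↑W ∧
      Set.ncard {t : ZMod D.m | D.v (t + 1) = D.v t + ((k : ℕ) : ZMod (s * k))} = n2 ∧
      n2 ≤ k * (s - 1) - 2 ∧
      s ∣ n2 + k + 1 ∧
      1 ≤ (n2 + k + 1) / s ∧ (n2 + k + 1) / s ≤ k - 1 := by
  classical
  have hsk0 : 0 < s * k := Nat.mul_pos (by omega) (by omega)
  haveI : NeZero (s * k) := ⟨by omega⟩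
  haveI : NeZero s := ⟨by omega⟩
  have h2k : 2 * k ≤ s * k := Nat.mul_le_mul_right k hs
  have hk1n : k + 1 < s * k := by omega
  have hs1k : (s - 1) * k + k = s * k := by
    obtain ⟨s1, hs1⟩ := Nat.exists_eq_add_of_le (show 1 ≤ s by omega)
    subst hs1
    rw [show 1 + s1 - 1 = s1 by omega]; ring
  have hrange : (s * k + k - 1) / k = s := by
    have hc : s * k = k * s := Nat.mul_comm s k
    have h1 : s * k + k - 1 = (k - 1) + k * s := by omega
    rw [h1, Nat.add_mul_div_left _ _ (show 0 < k by omega),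
      Nat.div_eq_of_lt (by omega), Nat.zero_add]
  -- step 1 : structure of W
  have hWuniq : ∀ r : ℕ, r < k → ∃ c : ℕ, c < s ∧
      ((r + c * k : ℕ) : ZMod (s * k)) ∈ W ∧
      (∀ c' : ℕ, c' < s → ((r + c' * k : ℕ) : ZMod (s * k)) ∈ W → c' = c) := by
    intro r hr
    obtain ⟨a, ha⟩ := Finset.card_eq_one.mp (hW1 ((r : ℕ) : ZMod (s * k)))
    have haW : a ∈ W ∧ a ∈ xcov (s * k) k ((r : ℕ) : ZMod (s * k)) := by
      have h0 : a ∈ W ∩ xcov (s * k) k ((r : ℕ) : ZMod (s * k)) := by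
        rw [ha]; exact Finset.mem_singleton_self a
      exact Finset.mem_inter.mp h0
    obtain ⟨c, hcmem, hcval⟩ := Finset.mem_image.mp haW.2
    rw [Finset.mem_range, hrange] at hcmem
    have hacast : a = ((r + c * k : ℕ) : ZMod (s * k)) := by
      rw [← hcval]; push_cast; ring
    refine ⟨c, hcmem, hacast ▸ haW.1, ?_⟩
    intro c' hc' hmem
    have hmem2 : ((r + c' * k : ℕ) : ZMod (s * k)) ∈
        W ∩ xcov (s * k) k ((r : ℕ) : ZMod (s * k)) := by
      refine Finset.mem_inter.mpr ⟨hmem, ?_⟩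
      apply Finset.mem_image.mpr
      refine ⟨c', by rw [Finset.mem_range, hrange]; exact hc', ?_⟩
      push_cast; ring
    rw [ha, Finset.mem_singleton] at hmem2
    have hval := congrArg ZMod.val (hmem2.trans hacast)
    have hb1 : r + c' * k < s * k := by
      have h3 : c' * k ≤ (s - 1) * k := Nat.mul_le_mul_right k (by omega)
      omega
    have hb2 : r + c * k < s * k := by
      have h3 : c * k ≤ (s - 1) * k := Nat.mul_le_mul_right k (by omega)
      omega
    rw [ZMod.val_natCast_of_lt hb1, ZMod.val_natCast_of_lt hb2] at hval
    exact Nat.eq_of_mul_eq_mul_right (show 0 < k by omega) (by omega)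
  -- step 2 : choose b
  obtain ⟨b, hb, hbW, hbU⟩ : ∃ b : ℕ → ℕ, (∀ r, b r < s) ∧
      (∀ r, r < k → ((r + b r * k : ℕ) : ZMod (s * k)) ∈ W) ∧
      (∀ r, r < k → ∀ c', c' < s → ((r + c' * k : ℕ) : ZMod (s * k)) ∈ W → c' = b r) := by
    refine ⟨fun r => if hr : r < k then (hWuniq r hr).choose else 0, ?_, ?_, ?_⟩
    · intro r
      by_cases hr : r < k
      · simp only [dif_pos hr]; exact (hWuniq r hr).choose_spec.1
      · simp only [dif_neg hr]; omega
    · intro r hr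
      simp only [dif_pos hr]; exact (hWuniq r hr).choose_spec.2.1
    · intro r hr c' hc' hmem
      simp only [dif_pos hr]; exact (hWuniq r hr).choose_spec.2.2 c' hc' hmem
  have hWall : ∀ x ∈ W, ∃ r, r < k ∧ x = ((r + b r * k : ℕ) : ZMod (s * k)) := by
    intro x hx
    have hrk : x.val % k < k := Nat.mod_lt _ (by omega)
    have hcs : x.val / k < s := by
      rw [Nat.div_lt_iff_lt_mul (show 0 < k by omega)]
      have := ZMod.val_lt x
      have hc : s * k = k * s := Nat.mul_comm s k
      omega
    have hxe : x = ((x.val % k + x.val / k * k : ℕ) : ZMod (s * k)) := by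
      rw [Nat.mod_add_div' x.val k]
      exact (ZMod.natCast_zmod_val x).symm
    have hc := hbU (x.val % k) hrk (x.val / k) hcs (hxe ▸ hx)
    exact ⟨x.val % k, hrk, by rw [← hc]; exact hxe⟩
  -- step 3 : the cycle
  set m := psum s k b k with hmdef
  have hkm : k ≤ m := le_psum k
  haveI : NeZero m := ⟨by omega⟩
  haveI : Fact (1 < m) := ⟨by omega⟩
  set v : ZMod m → ZMod (s * k) := fun t => ((Vnat s k b t.val : ℕ) : ZMod (s * k)) with hvdef
  have hvlt : ∀ t : ZMod m, t.val < m := fun t => ZMod.val_lt t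
  have hinj : Function.Injective v := by
    intro t1 t2 h
    apply ZMod.val_injective
    apply Vnat_inj hs hk hb (hvlt t1) (hvlt t2)
    have h2 := congrArg ZMod.val h
    rwa [hvdef, ZMod.val_natCast_of_lt (Vnat_lt hs hk hb (hvlt t1)),
      ZMod.val_natCast_of_lt (Vnat_lt hs hk hb (hvlt t2))] at h2
  have hsucc : ∀ t : ZMod m, (t + 1).val = (t.val + 1) % m := by
    intro t
    rw [ZMod.val_add, ZMod.val_one]
  have hstep_bdry : ∀ t : ZMod m, t.val + 1 = psum s k b (blk s k b t.val + 1) →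
      v (t + 1) = v t + ((k + 1 : ℕ) : ZMod (s * k)) := by
    intro t hbd
    have hp := hvlt t
    obtain ⟨h1, h2, h3⟩ := blk_spec (b := b) hp
    show ((Vnat s k b (t + 1).val : ℕ) : ZMod (s * k)) = _
    rw [hsucc t]
    by_cases hlt : blk s k b t.val + 1 < k
    · have hmono : psum s k b (blk s k b t.val + 1) < psum s k b k := psum_strictMono hlt
      rw [Nat.mod_eq_of_lt (by omega)]
      exact step_bdry_lt hs hk hb hp hbd hlt
    · have hk2 : blk s k b t.val + 1 = k := by omega
      have heq : t.val + 1 = m := by rw [hbd, hk2]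
      rw [heq, Nat.mod_self]
      exact step_wrap hs hk hb hp hbd hk2
  have hstep_mid : ∀ t : ZMod m, t.val + 1 ≠ psum s k b (blk s k b t.val + 1) →
      v (t + 1) = v t + ((k : ℕ) : ZMod (s * k)) := by
    intro t hne
    have hp := hvlt t
    obtain ⟨h1, h2, h3⟩ := blk_spec (b := b) hp
    have hmid : t.val + 1 < psum s k b (blk s k b t.val + 1) := by omega
    have hlt2 : t.val + 1 < m := by
      have hmono : psum s k b (blk s k b t.val + 1) ≤ psum s k b k :=
        psum_strictMono.monotone (by omega)
      omega
    show ((Vnat s k b (t + 1).val : ℕ) : ZMod (s * k)) = _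
    rw [hsucc t, Nat.mod_eq_of_lt hlt2]
    exact step_mid hs hk hb hp hmid
  have hkne : ((k : ℕ) : ZMod (s * k)) ≠ ((k + 1 : ℕ) : ZMod (s * k)) := by
    intro h
    have h2 := congrArg ZMod.val h
    rw [ZMod.val_natCast_of_lt (by omega), ZMod.val_natCast_of_lt hk1n] at h2
    omega
  have hclass : ∀ t : ZMod m, (v (t + 1) = v t + ((k + 1 : ℕ) : ZMod (s * k))) ↔
      t.val + 1 = psum s k b (blk s k b t.val + 1) := by
    intro t
    constructor
    · intro h
      by_contra hne
      have h2 := hstep_mid t hne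
      rw [h] at h2
      exact hkne (add_left_cancel h2.symm)
    · exact hstep_bdry t
  have hstepD : ∀ t : ZMod m, v (t + 1) = v t + ((k : ℕ) : ZMod (s * k)) ∨
      v (t + 1) = v t + ((k + 1 : ℕ) : ZMod (s * k)) := by
    intro t
    by_cases hbd : t.val + 1 = psum s k b (blk s k b t.val + 1)
    · exact Or.inr (hstep_bdry t hbd)
    · exact Or.inl (hstep_mid t hbd)
  -- boundary positions
  set F : Finset (ZMod m) := (Finset.range k).image
      (fun r => ((psum s k b (r + 1) - 1 : ℕ) : ZMod m)) with hFdef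
  have hple : ∀ r, r < k → 1 ≤ psum s k b (r + 1) ∧ psum s k b (r + 1) ≤ m := by
    intro r hr
    constructor
    · have := le_psum (s := s) (k := k) (b := b) (r + 1); omega
    · exact psum_strictMono.monotone (by omega)
  have hFval : ∀ r, r < k → (((psum s k b (r + 1) - 1 : ℕ) : ZMod m)).val
      = psum s k b (r + 1) - 1 := by
    intro r hr
    have := hple r hr
    exact ZMod.val_natCast_of_lt (by omega)
  have hmemF : ∀ t : ZMod m, t ∈ F ↔ t.val + 1 = psum s k b (blk s k b t.val + 1) := by
    intro t
    constructor
    · intro ht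
      obtain ⟨r, hr, hteq⟩ := Finset.mem_image.mp ht
      rw [Finset.mem_range] at hr
      have hv : t.val = psum s k b (r + 1) - 1 := by rw [← hteq]; exact hFval r hr
      have hp1 := hple r hr
      have hmono : psum s k b r < psum s k b (r + 1) := psum_strictMono (by omega)
      have hblk : blk s k b t.val = r := blk_eq hr (by omega) (by omega)
      rw [hblk]; omega
    · intro hbd
      have hp := hvlt t
      obtain ⟨h1, h2, h3⟩ := blk_spec (b := b) hp
      apply Finset.mem_image.mpr
      refine ⟨blk s k b t.val, Finset.mem_range.mpr h1, ?_⟩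
      have heq : psum s k b (blk s k b t.val + 1) - 1 = t.val := by omega
      rw [heq, ZMod.natCast_zmod_val]
  have hcardF : F.card = k := by
    rw [hFdef, Finset.card_image_of_injOn, Finset.card_range]
    intro r1 h1 r2 h2 he
    rw [Finset.mem_coe, Finset.mem_range] at h1 h2
    have hv := congrArg ZMod.val he
    rw [hFval r1 h1, hFval r2 h2] at hv
    have hp1 := hple r1 h1
    have hp2 := hple r2 h2
    have hinj2 : psum s k b (r1 + 1) = psum s k b (r2 + 1) := by omega
    have := (psum_strictMono (b := b) (s := s) (k := k)).injective hinj2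
    omega
  -- sum formula
  have hsum : m = (∑ r ∈ Finset.range k, tstep s k b r) + k := by
    rw [hmdef]
    unfold psum
    rw [Finset.sum_add_distrib, Finset.sum_const, Finset.card_range, smul_eq_mul, mul_one]
  -- bound on n2
  have hts_le : ∀ r, r < k → tstep s k b r ≤ s - 1 := fun r _ => by
    have := tstep_lt (b := b) (k := k) (show 0 < s by omega) r; omega
  have hbound : m - k ≤ k * (s - 1) - 2 := by
    by_contra hcon
    push_neg at hcon
    have hsum_le : (∑ r ∈ Finset.range k, tstep s k b r) ≤ k * (s - 1) := by
      calc (∑ r ∈ Finset.range k, tstep s k b r) ≤ ∑ _r ∈ Finset.range k, (s - 1) :=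
        Finset.sum_le_sum (fun r hr => hts_le r (Finset.mem_range.mp hr))
      _ = k * (s - 1) := by rw [Finset.sum_const, Finset.card_range, smul_eq_mul]
    obtain ⟨r0, hr0k, hall⟩ : ∃ r0, r0 < k ∧ ∀ r, r < k → r ≠ r0 → tstep s k b r = s - 1 := by
      by_cases hex : ∃ r, r < k ∧ tstep s k b r ≠ s - 1
      · obtain ⟨r0, hr0k, hr0⟩ := hex
        refine ⟨r0, hr0k, ?_⟩
        intro r hrk hne
        by_contra hne2
        have hdefsum : (∑ j ∈ Finset.range k, tstep s k b j) +
            (∑ j ∈ Finset.range k, (s - 1 - tstep s k b j)) = k * (s - 1) := by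
          rw [← Finset.sum_add_distrib]
          calc ∑ j ∈ Finset.range k, (tstep s k b j + (s - 1 - tstep s k b j))
              = ∑ _j ∈ Finset.range k, (s - 1) := Finset.sum_congr rfl (fun j hj => by
                have := hts_le j (Finset.mem_range.mp hj); omega)
          _ = k * (s - 1) := by rw [Finset.sum_const, Finset.card_range, smul_eq_mul]
        have hpairsum := Finset.sum_pair (f := fun j => s - 1 - tstep s k b j) hne
        have hsubset : ({r, r0} : Finset ℕ) ⊆ Finset.range k := by
          intro x hx
          rw [Finset.mem_insert, Finset.mem_singleton] at hx
          rw [Finset.mem_range]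
          rcases hx with rfl | rfl
          · exact hrk
          · exact hr0k
        have hpair : (s - 1 - tstep s k b r) + (s - 1 - tstep s k b r0) ≤
            ∑ j ∈ Finset.range k, (s - 1 - tstep s k b j) :=
          le_trans (le_of_eq hpairsum.symm) (Finset.sum_le_sum_of_subset hsubset)
        have hd1 : 1 ≤ s - 1 - tstep s k b r := by have := hts_le r hrk; omega
        have hd2 : 1 ≤ s - 1 - tstep s k b r0 := by have := hts_le r0 hr0k; omega
        omega
      · push_neg at hex
        exact ⟨0, by omega, fun r hrk _ => hex r hrk⟩
    -- chain of consecutive elements of W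
    have hne_idx : ∀ j, j + 1 ≤ k - 1 → (r0 + 1 + j) % k ≠ r0 := by
      intro j hj hcontra
      have hdm := Nat.div_add_mod (r0 + 1 + j) k
      rw [hcontra] at hdm
      have hq1 : 1 ≤ (r0 + 1 + j) / k := by
        rcases Nat.eq_zero_or_pos ((r0 + 1 + j) / k) with h0 | h0
        · rw [h0, Nat.mul_zero] at hdm; omega
        · exact h0
      have hmul := Nat.mul_le_mul_left k hq1
      rw [Nat.mul_one] at hmul
      omega
    have hchain : ∀ j, j ≤ k - 1 →
        (((r0 + 1 + j) % k + b ((r0 + 1 + j) % k) * k : ℕ) : ZMod (s * k)) =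
          (((r0 + 1) % k + b ((r0 + 1) % k) * k : ℕ) : ZMod (s * k)) + (j : ZMod (s * k)) := by
      intro j
      induction j with
      | zero => intro _; simp
      | succ j ih =>
        intro hj
        have hih := ih (by omega)
        have hrlt : (r0 + 1 + j) % k < k := Nat.mod_lt _ (by omega)
        have hne := hne_idx j hj
        have hts := hall _ hrlt hne
        have hcr := chain_rel hs hk hb hrlt hts
        rw [Nat.mod_add_mod] at hcr
        calc (((r0 + 1 + (j + 1)) % k + b ((r0 + 1 + (j + 1)) % k) * k : ℕ) : ZMod (s * k))
            = (((r0 + 1 + j) % k + b ((r0 + 1 + j) % k) * k : ℕ) : ZMod (s * k)) + 1 := by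
              rw [show r0 + 1 + (j + 1) = r0 + 1 + j + 1 by ring]; exact hcr
        _ = (((r0 + 1) % k + b ((r0 + 1) % k) * k : ℕ) : ZMod (s * k))
              + (j : ZMod (s * k)) + 1 := by rw [hih]
        _ = (((r0 + 1) % k + b ((r0 + 1) % k) * k : ℕ) : ZMod (s * k))
              + ((j + 1 : ℕ) : ZMod (s * k)) := by push_cast; ring
    obtain ⟨l, hl, hlW⟩ :=
      hW2 ((((r0 + 1) % k + b ((r0 + 1) % k) * k : ℕ) : ZMod (s * k)))
    apply hlW
    obtain ⟨h', hh', hlv⟩ := Finset.mem_image.mp hl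
    rw [Finset.mem_range] at hh'
    have hch := hchain h' (by omega)
    rw [← hlv, ← hch]
    exact hbW _ (Nat.mod_lt _ (by omega))
  -- divisibility
  have hdvd : s ∣ (m - k) + k + 1 := by
    have hcast := psum_k_cast hs hk hb
    rw [← hmdef] at hcast
    have h1 : ((m + 1 : ℕ) : ZMod s) = 0 := by push_cast; rw [hcast]; ring
    have h2 : (m - k) + k + 1 = m + 1 := by omega
    rw [h2]
    exact (ZMod.natCast_eq_zero_iff _ _).mp h1
  obtain ⟨q, hq⟩ := hdvd
  have hdiv : ((m - k) + k + 1) / s = q := by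
    rw [hq, Nat.mul_div_cancel_left _ (show 0 < s by omega)]
  have hq1 : 1 ≤ q := by
    rcases Nat.eq_zero_or_pos q with h | h
    · rw [h, Nat.mul_zero] at hq; omega
    · exact h
  have hqk : q ≤ k - 1 := by
    have hks : k * (s - 1) + k = k * s := by
      obtain ⟨s1, hs1⟩ := Nat.exists_eq_add_of_le (show 1 ≤ s by omega)
      subst hs1; rw [show 1 + s1 - 1 = s1 by omega]; ring
    by_contra hcq
    have hkq : k ≤ q := by omega
    have h5 : s * k ≤ s * q := Nat.mul_le_mul_left s hkq
    have hc : s * k = k * s := Nat.mul_comm s k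
    omega
  -- assemble
  refine ⟨⟨m, by omega, v, hinj, hstepD⟩, m - k, ?_, ?_, ?_, hbound, ⟨q, hq⟩,
    by rw [hdiv]; exact hq1, by rw [hdiv]; exact hqk⟩
  · show Set.ncard {t : ZMod m | v (t + 1) = v t + ((k + 1 : ℕ) : ZMod (s * k))} = k
    have hset : {t : ZMod m | v (t + 1) = v t + ((k + 1 : ℕ) : ZMod (s * k))} = ↑F := by
      ext t
      simp only [Set.mem_setOf_eq, Finset.mem_coe]
      exact ⟨fun h => (hmemF t).mpr ((hclass t).mp h), fun h => (hclass t).mpr ((hmemF t).mp h)⟩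
    rw [hset, Set.ncard_coe_finset, hcardF]
  · show {w : ZMod (s * k) | ∃ t : ZMod m,
        v (t + 1) = v t + ((k + 1 : ℕ) : ZMod (s * k)) ∧ w = v (t + 1)} = ↑W
    ext x
    simp only [Set.mem_setOf_eq, Finset.mem_coe]
    constructor
    · rintro ⟨t, hstep, rfl⟩
      have hbd := (hclass t).mp hstep
      have hp := hvlt t
      obtain ⟨h1, h2, h3⟩ := blk_spec (b := b) hp
      by_cases hlt : blk s k b t.val + 1 < k
      · have hmono : psum s k b (blk s k b t.val + 1) < psum s k b k := psum_strictMono hlt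
        have hv2 : v (t + 1) =
            ((Vnat s k b (psum s k b (blk s k b t.val + 1)) : ℕ) : ZMod (s * k)) := by
          show ((Vnat s k b (t + 1).val : ℕ) : ZMod (s * k)) = _
          rw [hsucc t, hbd, Nat.mod_eq_of_lt (by omega)]
        rw [hv2, Vnat_start hs hk hb hlt]
        exact hbW _ hlt
      · have hk2 : blk s k b t.val + 1 = k := by omega
        have heq : t.val + 1 = m := by rw [hbd, hk2]
        have hps0 : psum s k b 0 = 0 := by simp [psum]
        have hv2 : v (t + 1) = ((Vnat s k b (psum s k b 0) : ℕ) : ZMod (s * k)) := by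
          show ((Vnat s k b (t + 1).val : ℕ) : ZMod (s * k)) = _
          rw [hsucc t, heq, Nat.mod_self, hps0]
        rw [hv2, Vnat_start hs hk hb (show 0 < k by omega)]
        exact hbW 0 (by omega)
    · intro hx
      obtain ⟨r0, hr0, rfl⟩ := hWall _ hx
      by_cases h0 : r0 = 0
      · subst h0
        have hpk1 : psum s k b (k - 1) < psum s k b k := psum_strictMono (by omega)
        have htval : (((m - 1 : ℕ) : ZMod m)).val = m - 1 := ZMod.val_natCast_of_lt (by omega)
        have hblk : blk s k b (((m - 1 : ℕ) : ZMod m)).val = k - 1 := by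
          rw [htval]
          exact blk_eq (by omega) (by omega) (by rw [show k - 1 + 1 = k by omega]; omega)
        have hbd : (((m - 1 : ℕ) : ZMod m)).val + 1
            = psum s k b (blk s k b (((m - 1 : ℕ) : ZMod m)).val + 1) := by
          rw [hblk, htval, show k - 1 + 1 = k by omega]; omega
        refine ⟨((m - 1 : ℕ) : ZMod m), hstep_bdry _ hbd, ?_⟩
        have hps0 : psum s k b 0 = 0 := by simp [psum]
        have hv2 : v (((m - 1 : ℕ) : ZMod m) + 1)
            = ((Vnat s k b (psum s k b 0) : ℕ) : ZMod (s * k)) := by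
          show ((Vnat s k b ((((m - 1 : ℕ) : ZMod m)) + 1).val : ℕ) : ZMod (s * k)) = _
          rw [hsucc _, htval, show m - 1 + 1 = m by omega, Nat.mod_self, hps0]
        rw [hv2, Vnat_start hs hk hb (show 0 < k by omega)]
      · have h1r : 1 ≤ r0 := by omega
        have hpr0m : psum s k b r0 < m := psum_strictMono hr0
        have hpr01 : 1 ≤ psum s k b r0 := by
          have := le_psum (s := s) (k := k) (b := b) r0; omega
        have htval : (((psum s k b r0 - 1 : ℕ) : ZMod m)).val = psum s k b r0 - 1 :=
          ZMod.val_natCast_of_lt (by omega)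
        have hmono2 : psum s k b (r0 - 1) < psum s k b r0 := by
          have h6 : psum s k b (r0 - 1) < psum s k b (r0 - 1 + 1) := psum_strictMono (by omega)
          rwa [show r0 - 1 + 1 = r0 by omega] at h6
        have hblk : blk s k b (((psum s k b r0 - 1 : ℕ) : ZMod m)).val = r0 - 1 := by
          rw [htval]
          apply blk_eq (by omega) (by omega)
          rw [show r0 - 1 + 1 = r0 by omega]; omega
        have hbd : (((psum s k b r0 - 1 : ℕ) : ZMod m)).val + 1
            = psum s k b (blk s k b (((psum s k b r0 - 1 : ℕ) : ZMod m)).val + 1) := by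
          rw [hblk, htval, show r0 - 1 + 1 = r0 by omega]; omega
        refine ⟨((psum s k b r0 - 1 : ℕ) : ZMod m), hstep_bdry _ hbd, ?_⟩
        have hv2 : v (((psum s k b r0 - 1 : ℕ) : ZMod m) + 1)
            = ((Vnat s k b (psum s k b r0) : ℕ) : ZMod (s * k)) := by
          show ((Vnat s k b ((((psum s k b r0 - 1 : ℕ) : ZMod m)) + 1).val : ℕ)
            : ZMod (s * k)) = _
          rw [hsucc _, htval, show psum s k b r0 - 1 + 1 = psum s k b r0 by omega,
            Nat.mod_eq_of_lt (by omega)]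
        rw [hv2, Vnat_start hs hk hb hr0]
  · show Set.ncard {t : ZMod m | v (t + 1) = v t + ((k : ℕ) : ZMod (s * k))} = m - k
    have hsetc : {t : ZMod m | v (t + 1) = v t + ((k : ℕ) : ZMod (s * k))} = ↑(Fᶜ) := by
      ext t
      simp only [Set.mem_setOf_eq, Finset.coe_compl, Set.mem_compl_iff, Finset.mem_coe]
      constructor
      · intro h ht
        have hbd := (hmemF t).mp ht
        have h2 := hstep_bdry t hbd
        rw [h] at h2
        exact hkne (add_left_cancel h2)
      · intro h
        exact hstep_mid t (fun hbd => h ((hmemF t).mpr hbd))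
    rw [hsetc, Set.ncard_coe_finset, Finset.card_compl, hcardF, ZMod.card]
end
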